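/- arXiv:1711.01483 — 11 statements merged into one kernel-verified Lean document; each statement's English description precedes it below -/
import Mathlib

section
/- Let G = (A, B, E) be a bipartite graph that contains no induced matching of size n (i.e., no nK₂ as induced subgraph respecting the bipartition). Then there is a set S ⊆ A with |S| ≤ n−1 such that N(S) = N(A), i.e., every vertex of B that has a neighbour in A has a neighbour in S. -/
/-!
Take an inclusion-minimal `S ⊆ A` with `N(S) = N(A)`. By minimality every `a ∈ S` has a
private neighbour `b_a`, adjacent to `a` but to no other vertex of `S`; the edges `a b_a`
then form an induced matching of size `|S|`, so `|S| < n`.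
-/

open Finset

/-- A bipartite graph with top part `A`, bottom part `B` and edge relation `E` contains
an induced matching `nK₂` (respecting the bipartition). -/
def HasInducedMatching {A B : Type*} (E : A → B → Prop) (n : ℕ) : Prop :=
  ∃ (a : Fin n → A) (b : Fin n → B), Function.Injective a ∧ Function.Injective b ∧
    (∀ i, E (a i) (b i)) ∧ (∀ i j, i ≠ j → ¬ E (a i) (b j))

section InducedMatching

variable {A B : Type*} {E : A → B → Prop}

theorem HasInducedMatching.mono {m n : ℕ} (h : HasInducedMatching E n) (hmn : m ≤ n) :
    HasInducedMatching E m := by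
  obtain ⟨a, b, ha, hb, hE, hnE⟩ := h
  refine ⟨a ∘ Fin.castLE hmn, b ∘ Fin.castLE hmn, ha.comp (Fin.castLE_injective hmn),
    hb.comp (Fin.castLE_injective hmn), fun i => hE _, fun i j hij => hnE _ _ ?_⟩
  exact (Fin.castLE_injective hmn).ne hij

def IsPrivateNeighbour (E : A → B → Prop) (S : Finset A) (a : A) (b : B) : Prop :=
  E a b ∧ ∀ a' ∈ S, a' ≠ a → ¬ E a' b

theorem hasInducedMatching_card_of_forall_privateNeighbour {S : Finset A}
    (h : ∀ a ∈ S, ∃ b, IsPrivateNeighbour E S a b) : HasInducedMatching E #S := by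
  choose p hp using h
  let a : Fin #S → A := fun i => S.equivFin.symm i
  let b : Fin #S → B := fun i => p (a i) (S.equivFin.symm i).2
  have ha : Function.Injective a := Subtype.val_injective.comp S.equivFin.symm.injective
  have hcross : ∀ i j, i ≠ j → ¬ E (a i) (b j) := fun i j hij =>
    (hp _ _).2 (a i) (S.equivFin.symm i).2 (ha.ne hij)
  refine ⟨a, b, ha, fun i j hij => ?_, fun i => (hp _ _).1, hcross⟩
  by_contra hne
  exact hcross i j hne (hij ▸ (hp _ _).1)

/-- `N(S) = N(A)`. -/
def CoversNeighbourhood (E : A → B → Prop) (S : Finset A) : Prop :=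
  ∀ b, (∃ a, E a b) → ∃ a ∈ S, E a b

theorem exists_privateNeighbour_of_minimal_coversNeighbourhood [DecidableEq A] {S : Finset A}
    (hS : Minimal (CoversNeighbourhood E) S) {a : A} (ha : a ∈ S) :
    ∃ b, IsPrivateNeighbour E S a b := by
  have hErase : ¬ CoversNeighbourhood E (S.erase a) :=
    hS.not_prop_of_lt (erase_ssubset ha)
  simp only [CoversNeighbourhood, not_forall, not_exists, not_and] at hErase
  obtain ⟨b, hb, hnot⟩ := hErase
  obtain ⟨x, hxS, hxb⟩ := hS.prop b hb
  have hxa : x = a := by_contra fun hne => hnot x (mem_erase.2 ⟨hne, hxS⟩) hxb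
  subst hxa
  exact ⟨b, hxb, fun a' ha' hne => hnot a' (mem_erase.2 ⟨hne, ha'⟩)⟩

end InducedMatching

/-- If a bipartite graph contains no induced matching of size `n`, then there is a set
`S ⊆ A` with `|S| ≤ n - 1` covering the neighbourhood of `A`: every vertex of `B` with a
neighbour in `A` has a neighbour in `S`. -/
theorem matching_free_cover {A B : Type*} [Fintype A] (E : A → B → Prop) (n : ℕ)
    (hfree : ¬ HasInducedMatching E n) :
    ∃ S : Finset A, S.card ≤ n - 1 ∧ ∀ b : B, (∃ a : A, E a b) → ∃ a ∈ S, E a b := by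
  classical
  have hUniv : CoversNeighbourhood E univ := fun _ ⟨a, hab⟩ => ⟨a, mem_univ a, hab⟩
  obtain ⟨S, -, hS⟩ := exists_minimal_le_of_wellFoundedLT _ _ hUniv
  refine ⟨S, ?_, hS.prop⟩
  by_contra hlarge
  have hMatching := hasInducedMatching_card_of_forall_privateNeighbour fun _ ha =>
    exists_privateNeighbour_of_minimal_coversNeighbourhood hS ha
  exact hfree (hMatching.mono (by omega))
end

section
/- Let G = (A, B, E) be a bipartite graph such that the bipartite complement of G contains no induced matching of size m (equivalently, G contains no induced bipartite co-matching of size m). Then there is a set S ⊆ A with |S| ≤ m−1 such that every vertex of B having a non-neighbour in A has a non-neighbour in S. -/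
/-!
Choose `b₀ ∈ B` whose non-neighbourhood is nonempty and inclusion-minimal among nonempty ones,
and `a₀` a non-neighbour of `b₀`. A co-matching of size `m - 1` between the neighbours of `b₀`
and the neighbours of `a₀` extends by the pair `(a₀, b₀)` to one of size `m`, so induction gives
a set `S'` of size `< m - 1` among the neighbours of `b₀` that works for the neighbours of `a₀`;
then `insert a₀ S'` works for all of `B`: a neighbour `b` of `a₀` whose non-neighbours all lie
outside the neighbourhood of `b₀` would have a non-neighbourhood strictly inside that of `b₀`.
-/

open Finset

/-- A bipartite graph with top part `A`, bottom part `B` and edge relation `E` contains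
an induced bipartite co-matching of size `m`: vertices `a₁,…,aₘ`, `b₁,…,bₘ` with
`aᵢbᵢ ∉ E` and `aᵢbⱼ ∈ E` for `i ≠ j`. -/
def HasInducedCoMatching {A B : Type*} (E : A → B → Prop) (m : ℕ) : Prop :=
  ∃ (a : Fin m → A) (b : Fin m → B), Function.Injective a ∧ Function.Injective b ∧
    (∀ i, ¬ E (a i) (b i)) ∧ (∀ i j, i ≠ j → E (a i) (b j))

namespace HasInducedCoMatching

variable {A B : Type*} {E : A → B → Prop}

theorem zero (E : A → B → Prop) : HasInducedCoMatching E 0 :=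
  ⟨Fin.elim0, Fin.elim0, fun i => i.elim0, fun i => i.elim0, fun i => i.elim0, fun i => i.elim0⟩

theorem cons {n : ℕ} {a₀ : A} {b₀ : B} (h₀ : ¬ E a₀ b₀)
    (h : HasInducedCoMatching (fun (a : {a // E a b₀}) (b : {b // E a₀ b}) => E a b) n) :
    HasInducedCoMatching E (n + 1) := by
  obtain ⟨a, b, ha, hb, hdiag, hoff⟩ := h
  refine ⟨Fin.cons a₀ (Subtype.val ∘ a), Fin.cons b₀ (Subtype.val ∘ b),
    Fin.cons_injective_iff.2 ⟨?_, Subtype.val_injective.comp ha⟩,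
    Fin.cons_injective_iff.2 ⟨?_, Subtype.val_injective.comp hb⟩, ?_, ?_⟩
  · rintro ⟨i, hi⟩
    exact h₀ (hi ▸ (a i).2)
  · rintro ⟨i, hi⟩
    exact h₀ (hi ▸ (b i).2)
  · intro i
    cases i using Fin.cases with
    | zero => exact h₀
    | succ i => exact hdiag i
  · intro i j hij
    cases i using Fin.cases <;> cases j using Fin.cases
    · exact absurd rfl hij
    · exact (b _).2
    · exact (a _).2
    · exact hoff _ _ fun h => hij (congrArg Fin.succ h)

end HasInducedCoMatching

section

variable {A B : Type*} {E : A → B → Prop}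

theorem exists_nonAdj_of_minimal_nonNeighbours [Finite A] (h : ∃ a b, ¬ E a b) :
    ∃ a₀ b₀, ¬ E a₀ b₀ ∧ ∀ b, E a₀ b → (∃ a, ¬ E a b) → ∃ a, E a b₀ ∧ ¬ E a b := by
  obtain ⟨a, b, hab⟩ := h
  obtain ⟨b₀, ⟨a₀, ha₀⟩, hmin⟩ :=
    (InvImage.wf (fun b => {a | ¬ E a b}) wellFounded_lt).has_min {b | ∃ a, ¬ E a b} ⟨b, a, hab⟩
  refine ⟨a₀, b₀, ha₀, fun b hb hne => ?_⟩
  by_contra! hsub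
  refine hmin b hne (Set.ssubset_iff_subset_ne.2 ⟨fun a ha => ?_, fun heq => ?_⟩)
  · exact fun hab₀ => ha (hsub a hab₀)
  · exact (Set.ext_iff.1 heq a₀).2 ha₀ hb

theorem exists_cocover_card_lt [Finite A] (m : ℕ) (hfree : ¬ HasInducedCoMatching E m) :
    ∃ S : Finset A, S.card < m ∧ ∀ b, (∃ a, ¬ E a b) → ∃ a ∈ S, ¬ E a b := by
  classical
  induction m generalizing A B with
  | zero => exact absurd (HasInducedCoMatching.zero E) hfree
  | succ n ih =>
    by_cases hnon : ∃ a b, ¬ E a b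
    swap
    · push Not at hnon
      exact ⟨∅, Nat.succ_pos n, fun b ⟨a, hab⟩ => absurd (hnon a b) hab⟩
    obtain ⟨a₀, b₀, h₀, hmin⟩ := exists_nonAdj_of_minimal_nonNeighbours hnon
    obtain ⟨S', hcard, hcover⟩ :=
      ih (E := fun (a : {a // E a b₀}) (b : {b // E a₀ b}) => E a b)
        fun h => hfree (HasInducedCoMatching.cons h₀ h)
    refine ⟨insert a₀ (S'.map (Function.Embedding.subtype _)), ?_, fun b hb => ?_⟩
    · calc _ ≤ S'.card + 1 := by simpa using card_insert_le a₀ (S'.map _)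
        _ < n + 1 := by omega
    by_cases hab₀ : E a₀ b
    · obtain ⟨a, ha, hab⟩ := hmin b hab₀ hb
      obtain ⟨s, hs, hsb⟩ := hcover ⟨b, hab₀⟩ ⟨⟨a, ha⟩, hab⟩
      exact ⟨s, mem_insert_of_mem (mem_map_of_mem _ hs), hsb⟩
    · exact ⟨a₀, mem_insert_self _ _, hab₀⟩

end

/-- If a bipartite graph contains no induced bipartite co-matching of size `m`, then there
is a set `S ⊆ A` with `|S| ≤ m - 1` co-covering the non-neighbourhood of `A`: every vertex
of `B` with a non-neighbour in `A` has a non-neighbour in `S`. -/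
theorem comatching_free_cocover {A B : Type*} [Fintype A] (E : A → B → Prop) (m : ℕ)
    (hfree : ¬ HasInducedCoMatching E m) :
    ∃ S : Finset A, S.card ≤ m - 1 ∧ ∀ b : B, (∃ a : A, ¬ E a b) → ∃ a ∈ S, ¬ E a b := by
  obtain ⟨S, hcard, hcover⟩ := exists_cocover_card_lt m hfree
  exact ⟨S, by omega, hcover⟩
end

section
/- Every graph G containing no induced 2K₂ and no induced C₄ has cochromatic number at most 3: its vertex set can be partitioned into one independent set and two cliques. -/
/-!
If `G` contains an induced five-cycle `c`, then `2K₂`- and `C₄`-freeness force every vertex off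
the cycle to be adjacent to all of it or to none of it. The vertices complete to the cycle form a
clique and those anticomplete to it an independent set; adding two non-adjacent cycle vertices to
the independent set and the cycle edge opposite their common neighbour to the clique, and taking
that common neighbour as a second clique, covers `G`.

Otherwise `G` is a split graph. If some vertex `v` has a clique as neighbourhood and an independent
set as non-neighbourhood, then `N[v]` and its complement split `G`. If there is no such vertex, the
vertices whose neighbourhood is not a clique form a clique, the vertices whose non-neighbourhood is
not independent form an independent set (a short case analysis with the three forbidden induced
subgraphs each time), and every vertex is of one of the two kinds.
-/

theorem ZMod.forall_of_closed_add_one {n : ℕ} [NeZero n] {p : ZMod n → Prop} {k : ZMod n}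
    (hk : p k) (hstep : ∀ i, p i → p (i + 1)) (j : ZMod n) : p j := by
  have key (m : ℕ) : p (k + m) := by
    induction m with
    | zero => simpa using hk
    | succ m ih => simpa [add_assoc] using hstep _ ih
  simpa using key (j - k).val

namespace SimpleGraph

variable {V : Type*} (G : SimpleGraph V)

/-- The edges need not be disjoint: a shared endpoint already yields one of the four adjacencies,
so this says exactly that `G` has no induced `2K₂`. -/
def TwoK2Free : Prop :=
  ∀ ⦃a b c d⦄, G.Adj a b → G.Adj c d → G.Adj a c ∨ G.Adj a d ∨ G.Adj b c ∨ G.Adj b d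

def C4Free : Prop :=
  ∀ ⦃a b c d⦄, G.Adj a b → G.Adj b c → G.Adj c d → G.Adj d a → a ≠ c → b ≠ d →
    G.Adj a c ∨ G.Adj b d

def IsInducedC5 (c : ZMod 5 → V) : Prop :=
  ∀ i j, G.Adj (c i) (c j) ↔ j = i + 1 ∨ i = j + 1

variable {G}

theorem twoK2Free_of_not_exists
    (h : ¬∃ a b c d : V, a ≠ b ∧ a ≠ c ∧ a ≠ d ∧ b ≠ c ∧ b ≠ d ∧ c ≠ d ∧
      G.Adj a b ∧ G.Adj c d ∧ ¬G.Adj a c ∧ ¬G.Adj a d ∧ ¬G.Adj b c ∧ ¬G.Adj b d) :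
    G.TwoK2Free := by
  intro a b c d hab hcd
  by_contra! hn
  obtain ⟨hac, had, hbc, hbd⟩ := hn
  refine h ⟨a, b, c, d, hab.ne, ?_, ?_, ?_, ?_, hcd.ne, hab, hcd, hac, had, hbc, hbd⟩ <;>
    rintro rfl
  exacts [had hcd, hac hcd.symm, hbd hcd, hbc hcd.symm]

theorem c4Free_of_not_exists
    (h : ¬∃ a b c d : V, a ≠ b ∧ a ≠ c ∧ a ≠ d ∧ b ≠ c ∧ b ≠ d ∧ c ≠ d ∧
      G.Adj a b ∧ G.Adj b c ∧ G.Adj c d ∧ G.Adj d a ∧ ¬G.Adj a c ∧ ¬G.Adj b d) :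
    G.C4Free := by
  intro a b c d hab hbc hcd hda hac hbd
  by_contra! hn
  exact h ⟨a, b, c, d, hab.ne, hac, hda.ne.symm, hbc.ne, hbd, hcd.ne, hab, hbc, hcd, hda, hn⟩

theorem TwoK2Free.isIndepSet_setOf_not_adj (h2 : G.TwoK2Free) {x y : V} (hxy : G.Adj x y) :
    G.IsIndepSet {v | ¬G.Adj v x ∧ ¬G.Adj v y} := by
  intro u hu w hw _ huw
  rcases h2 huw hxy with h | h | h | h
  exacts [hu.1 h, hu.2 h, hw.1 h, hw.2 h]

theorem C4Free.isClique_setOf_adj (h4 : G.C4Free) {x y : V} (hxy : x ≠ y) (hnxy : ¬G.Adj x y) :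
    G.IsClique {v | G.Adj v x ∧ G.Adj v y} :=
  fun _ hu _ hw huw => (h4 hu.1 hw.1.symm hw.2 hu.2.symm huw hxy).resolve_right hnxy

theorem isInducedC5_of_adj {a b c d e : V} (hab : G.Adj a b) (hbc : G.Adj b c) (hcd : G.Adj c d)
    (hde : G.Adj d e) (hea : G.Adj e a) (hac : ¬G.Adj a c) (had : ¬G.Adj a d)
    (hbd : ¬G.Adj b d) (hbe : ¬G.Adj b e) (hce : ¬G.Adj c e) :
    G.IsInducedC5 ![a, b, c, d, e] := by
  have h (i : ZMod 5) : i = 0 ∨ i = 1 ∨ i = 2 ∨ i = 3 ∨ i = 4 := by revert i; decide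
  intro i j
  rcases h i with rfl | rfl | rfl | rfl | rfl <;> rcases h j with rfl | rfl | rfl | rfl | rfl <;>
    simp +decide [hab, hbc, hcd, hde, hea, hab.symm, hbc.symm, hcd.symm,
      hde.symm, hea.symm, hac, had, hbd, hbe, hce, G.adj_comm c a, G.adj_comm d a,
      G.adj_comm d b, G.adj_comm e b, G.adj_comm e c]

namespace IsInducedC5

variable {c : ZMod 5 → V} (hc : G.IsInducedC5 c)
include hc

theorem adj (i j : ZMod 5) (h : j = i + 1 ∨ i = j + 1) : G.Adj (c i) (c j) :=
  (hc i j).2 h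

theorem not_adj (i j : ZMod 5) (h : ¬(j = i + 1 ∨ i = j + 1)) : ¬G.Adj (c i) (c j) :=
  mt (hc i j).1 h

theorem injective : Function.Injective c := by
  have key : ∀ i j : ZMod 5, (∀ k, (k = i + 1 ∨ i = k + 1) ↔ (k = j + 1 ∨ j = k + 1)) → i = j := by
    decide
  intro i j hij
  exact key i j fun k => by rw [← hc, ← hc, hij]

theorem rotate (k : ZMod 5) : G.IsInducedC5 (fun i => c (k + i)) := by
  intro i j
  rw [hc, add_assoc, add_assoc, add_right_inj, add_right_inj]

theorem false_of_adj_zero_of_not_adj_one (h2 : G.TwoK2Free) (h4 : G.C4Free) {v : V}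
    (hv : ∀ i, v ≠ c i) (h0 : G.Adj v (c 0)) (h1 : ¬G.Adj v (c 1)) : False := by
  have h2' : ¬G.Adj v (c 2) := fun h2' =>
    (h4 h0 (hc.adj 0 1 (by decide)) (hc.adj 1 2 (by decide)) h2'.symm (hv 1)
      (hc.injective.ne (by decide))).elim h1 (hc.not_adj 0 2 (by decide))
  have h3 : G.Adj v (c 3) := by
    rcases h2 h0 (hc.adj 2 3 (by decide)) with h | h | h | h
    · exact absurd h h2'
    · exact h
    · exact absurd h (hc.not_adj 0 2 (by decide))
    · exact absurd h (hc.not_adj 0 3 (by decide))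
  have h4' : G.Adj v (c 4) :=
    (h4 h3 (hc.adj 3 4 (by decide)) (hc.adj 4 0 (by decide)) h0.symm (hv 4)
      (hc.injective.ne (by decide))).resolve_right (hc.not_adj 3 0 (by decide))
  rcases h2 h4' (hc.adj 1 2 (by decide)) with h | h | h | h
  · exact h1 h
  · exact h2' h
  · exact hc.not_adj 4 1 (by decide) h
  · exact hc.not_adj 4 2 (by decide) h

theorem adj_all_or_none (h2 : G.TwoK2Free) (h4 : G.C4Free) {v : V} (hv : ∀ i, v ≠ c i) :
    (∀ i, G.Adj v (c i)) ∨ ∀ i, ¬G.Adj v (c i) := by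
  by_contra! h
  obtain ⟨⟨j, hj⟩, k, hk⟩ := h
  obtain ⟨i, hi, hi1⟩ : ∃ i, G.Adj v (c i) ∧ ¬G.Adj v (c (i + 1)) := by
    by_contra! hstep
    exact hj (ZMod.forall_of_closed_add_one hk hstep j)
  exact (hc.rotate i).false_of_adj_zero_of_not_adj_one h2 h4 (fun _ => hv _)
    (by simpa using hi) hi1

theorem exists_indepSet_and_two_cliques_cover (h2 : G.TwoK2Free) (h4 : G.C4Free) :
    ∃ I C₁ C₂ : Set V, (∀ v, v ∈ I ∨ v ∈ C₁ ∨ v ∈ C₂) ∧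
      G.IsIndepSet I ∧ G.IsClique C₁ ∧ G.IsClique C₂ := by
  set Z := {v | ∀ i, ¬G.Adj v (c i)}
  set A := {v | ∀ i, G.Adj v (c i)}
  have hZ : G.IsIndepSet Z :=
    (h2.isIndepSet_setOf_not_adj (hc.adj 0 1 (by decide))).mono fun _ hv => And.intro (hv 0) (hv 1)
  have hA : G.IsClique A :=
    (h4.isClique_setOf_adj (hc.injective.ne (by decide)) (hc.not_adj 0 2 (by decide))).subset
      fun _ hv => And.intro (hv 0) (hv 2)
  refine ⟨insert (c 0) (insert (c 2) Z), insert (c 3) (insert (c 4) A), {c 1}, ?_, ?_, ?_,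
    Set.pairwise_singleton _ _⟩
  · intro v
    by_cases hv : ∃ i, v = c i
    · obtain ⟨i, rfl⟩ := hv
      obtain rfl | rfl | rfl | rfl | rfl : i = 0 ∨ i = 1 ∨ i = 2 ∨ i = 3 ∨ i = 4 := by
        revert i; decide
      all_goals simp
    · push Not at hv
      rcases hc.adj_all_or_none h2 h4 hv with h | h
      · exact Or.inr (Or.inl (Set.mem_insert_of_mem _ (Set.mem_insert_of_mem _ h)))
      · exact Or.inl (Set.mem_insert_of_mem _ (Set.mem_insert_of_mem _ h))
  · refine Set.pairwise_insert.2
      ⟨Set.pairwise_insert.2 ⟨hZ, fun b hb _ => ⟨fun h => hb 2 h.symm, hb 2⟩⟩, ?_⟩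
    rintro b (rfl | hb) _
    exacts [⟨hc.not_adj 0 2 (by decide), hc.not_adj 2 0 (by decide)⟩, ⟨fun h => hb 0 h.symm, hb 0⟩]
  · refine (hA.insert fun b hb _ => (hb 4).symm).insert ?_
    rintro b (rfl | hb) _
    exacts [hc.adj 3 4 (by decide), (hb 3).symm]

end IsInducedC5

theorem isClique_setOf_not_isClique_neighborSet (h2 : G.TwoK2Free) (h4 : G.C4Free)
    (h5 : ∀ c, ¬G.IsInducedC5 c) : G.IsClique {v | ¬G.IsClique (G.neighborSet v)} := by
  intro u hu w hw huw
  by_contra hnuw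
  simp only [Set.mem_ofPred_eq, isClique_iff, Set.Pairwise, mem_neighborSet, not_forall,
    exists_prop] at hu hw
  obtain ⟨x, hux, y, huy, hxy, hnxy⟩ := hu
  obtain ⟨p, hwp, q, hwq, hpq, hnpq⟩ := hw
  wlog hwx : ¬G.Adj w x generalizing x y with H
  · refine H y huy x hux hxy.symm (fun h => hnxy h.symm) fun hwy => ?_
    exact (h4 hux (not_not.1 hwx).symm hwy huy.symm huw hxy).elim hnuw hnxy
  wlog hup : ¬G.Adj u p generalizing p q with H
  · refine H q hwq p hwp hpq.symm (fun h => hnpq h.symm) fun huq => ?_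
    exact (h4 hwp (not_not.1 hup).symm huq hwq.symm huw.symm hpq).elim (fun h => hnuw h.symm) hnpq
  have hne_wx : w ≠ x := by rintro rfl; exact hnuw hux
  have hxp : G.Adj x p :=
    (((h2 hux hwp).resolve_left hnuw).resolve_left hup).resolve_left fun h => hwx h.symm
  have hxq : ¬G.Adj x q := fun hxq => (h4 hwp hxp.symm hxq hwq.symm hne_wx hpq).elim hwx hnpq
  have huq : G.Adj u q :=
    (((h2 hux hwq).resolve_left hnuw).resolve_right (not_or.2 ⟨fun h => hwx h.symm, hxq⟩))
  exact h5 _ (isInducedC5_of_adj hux hxp hwp.symm hwq huq.symm hup hnuw (fun h => hwx h.symm)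
    hxq hnpq)

theorem isIndepSet_setOf_not_isIndepSet_neighborSet_compl (h2 : G.TwoK2Free) (h4 : G.C4Free)
    (h5 : ∀ c, ¬G.IsInducedC5 c) : G.IsIndepSet {v | ¬G.IsIndepSet (Gᶜ.neighborSet v)} := by
  intro u hu w hw _ huw
  simp only [Set.mem_ofPred_eq, isIndepSet_iff, Set.Pairwise, mem_neighborSet, compl_adj,
    not_forall, not_not, exists_prop] at hu hw
  obtain ⟨x, ⟨hux, hnux⟩, y, ⟨huy, hnuy⟩, -, hxy⟩ := hu
  obtain ⟨p, ⟨hwp, hnwp⟩, q, ⟨hwq, hnwq⟩, -, hpq⟩ := hw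
  wlog hwx : G.Adj w x generalizing x y with H
  · exact H y huy hnuy x hux hnux hxy.symm
      ((((h2 huw hxy).resolve_left hnux).resolve_left hnuy).resolve_left hwx)
  wlog hup : G.Adj u p generalizing p q with H
  · exact H q hwq hnwq p hwp hnwp hpq.symm
      ((((h2 huw.symm hpq).resolve_left hnwp).resolve_left hnwq).resolve_left hup)
  have hpx : ¬G.Adj p x := fun hpx =>
    (h4 hup hpx hwx.symm huw.symm hux hwp.symm).elim hnux fun h => hnwp h.symm
  have hxq : G.Adj x q :=
    (((h2 hwx hpq).resolve_left hnwp).resolve_left hnwq).resolve_left fun h => hpx h.symm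
  have huq : ¬G.Adj u q := fun huq =>
    (h4 huq hxq.symm hwx.symm huw.symm hux hwq.symm).elim hnux fun h => hnwq h.symm
  exact h5 _ (isInducedC5_of_adj huw hwx hxq hpq.symm hup.symm hnux huq hnwq hnwp
    fun h => hpx h.symm)

theorem exists_isClique_isIndepSet_compl (h2 : G.TwoK2Free) (h4 : G.C4Free)
    (h5 : ∀ c, ¬G.IsInducedC5 c) : ∃ C : Set V, G.IsClique C ∧ G.IsIndepSet Cᶜ := by
  by_cases h : ∃ v, G.IsClique (G.neighborSet v) ∧ G.IsIndepSet (Gᶜ.neighborSet v)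
  · obtain ⟨v, hN, hM⟩ := h
    refine ⟨insert v (G.neighborSet v), hN.insert fun _ hb _ => hb, hM.mono fun w hw => ?_⟩
    simp only [Set.mem_compl_iff, Set.mem_insert_iff, mem_neighborSet, not_or] at hw
    exact (compl_adj G v w).2 ⟨Ne.symm hw.1, hw.2⟩
  · push Not at h
    exact ⟨_, isClique_setOf_not_isClique_neighborSet h2 h4 h5,
      (isIndepSet_setOf_not_isIndepSet_neighborSet_compl h2 h4 h5).mono
        fun v hv => h v (not_not.1 hv)⟩

end SimpleGraph

/-- Every `(2K₂, C₄)`-free graph has cochromatic number at most 3: its vertex set can be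
covered by one independent set and two cliques. -/
theorem cochromatic_three_of_2K2_C4_free {V : Type*} (G : SimpleGraph V)
    (h2K2 : ¬ ∃ a b c d : V, a ≠ b ∧ a ≠ c ∧ a ≠ d ∧ b ≠ c ∧ b ≠ d ∧ c ≠ d ∧
      G.Adj a b ∧ G.Adj c d ∧ ¬ G.Adj a c ∧ ¬ G.Adj a d ∧ ¬ G.Adj b c ∧ ¬ G.Adj b d)
    (hC4 : ¬ ∃ a b c d : V, a ≠ b ∧ a ≠ c ∧ a ≠ d ∧ b ≠ c ∧ b ≠ d ∧ c ≠ d ∧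
      G.Adj a b ∧ G.Adj b c ∧ G.Adj c d ∧ G.Adj d a ∧ ¬ G.Adj a c ∧ ¬ G.Adj b d) :
    ∃ I C₁ C₂ : Set V, (∀ v, v ∈ I ∨ v ∈ C₁ ∨ v ∈ C₂) ∧
      (∀ u ∈ I, ∀ v ∈ I, u ≠ v → ¬ G.Adj u v) ∧
      (∀ u ∈ C₁, ∀ v ∈ C₁, u ≠ v → G.Adj u v) ∧
      (∀ u ∈ C₂, ∀ v ∈ C₂, u ≠ v → G.Adj u v) := by
  have h2 := SimpleGraph.twoK2Free_of_not_exists h2K2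
  have h4 := SimpleGraph.c4Free_of_not_exists hC4
  by_cases hC5 : ∃ c, G.IsInducedC5 c
  · obtain ⟨c, hc⟩ := hC5
    exact hc.exists_indepSet_and_two_cliques_cover h2 h4
  · obtain ⟨C, hC, hI⟩ := SimpleGraph.exists_isClique_isIndepSet_compl h2 h4 fun c hc => hC5 ⟨c, hc⟩
    exact ⟨Cᶜ, C, ∅, fun v => (em' (v ∈ C)).imp_right Or.inl, hI, hC, by simp⟩
end

section
/- Let G = (A, B, E) be a bipartite graph containing no n disjoint induced stars nΛ_k (n stars K_{1,k} with centres in A and leaves in B, with no edges between distinct stars). Then there exists a set S ⊆ A, |S| ≤ n−1, such that every a ∈ A satisfies |N(a) \ N(S)| < k. -/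
open Finset

/-- A bipartite graph contains `n` induced disjoint stars `nΛ_k` with centres in the top
part `A` and `k` leaves each in the bottom part `B`, with no edges between distinct stars. -/
def HasStarForest {A B : Type*} (E : A → B → Prop) (n k : ℕ) : Prop :=
  ∃ (a : Fin n → A) (L : Fin n → Finset B), Function.Injective a ∧
    (∀ i j, i ≠ j → Disjoint (L i) (L j)) ∧ (∀ i, (L i).card = k) ∧
    (∀ i, ∀ b ∈ L i, E (a i) b) ∧ (∀ i j, i ≠ j → ∀ b ∈ L j, ¬ E (a i) b)

/-!
Call a set `T ⊆ A` of centres private if each `t ∈ T` has at least `k` neighbours outside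
`N(T \ {t})`; a private set of size `n` is exactly an `nΛ_k`, so private sets have fewer than
`n` elements. Take a private `T` maximising the potential `|N(T)| - (k - 1)|T|`. Deleting from
any set a centre with fewer than `k` private neighbours does not lower the potential, so every
set can be shrunk to a private set of at least the same potential, and no set beats `T`. If some
`a` had `k` neighbours outside `N(T)`, then `T ∪ {a}` would have larger potential.
-/

namespace StarForest

variable {A B : Type*} [Fintype B] [DecidableEq B] (E : A → B → Prop) [∀ a b, Decidable (E a b)]

def nbhd (a : A) : Finset B := univ.filter (E a)

def setNbhd (S : Finset A) : Finset B := S.biUnion (nbhd E)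

variable {E}

lemma nbhd_subset_setNbhd {a : A} {S : Finset A} (ha : a ∈ S) : nbhd E a ⊆ setNbhd E S :=
  subset_biUnion_of_mem _ ha

lemma setNbhd_mono {S T : Finset A} (h : S ⊆ T) : setNbhd E S ⊆ setNbhd E T :=
  biUnion_subset_biUnion_of_subset_left _ h

variable [DecidableEq A]

lemma card_setNbhd_insert (a : A) (T : Finset A) :
    #(setNbhd E (insert a T)) = #(setNbhd E T) + #(nbhd E a \ setNbhd E T) := by
  rw [setNbhd, biUnion_insert, ← card_sdiff_add_card, add_comm]
  rfl

variable (E) (k : ℕ)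

def HasPrivateNbhds (T : Finset A) : Prop :=
  ∀ t ∈ T, k ≤ #(nbhd E t \ setNbhd E (T.erase t))

def potential (T : Finset A) : ℤ := #(setNbhd E T) - ((k : ℤ) - 1) * #T

variable {E k}

lemma potential_insert {a : A} {T : Finset A} (ha : a ∉ T) :
    potential E k (insert a T) = potential E k T + #(nbhd E a \ setNbhd E T) - ((k : ℤ) - 1) := by
  simp only [potential, card_setNbhd_insert, card_insert_of_notMem ha]
  push_cast
  ring

lemma HasPrivateNbhds.mono {T U : Finset A} (hT : HasPrivateNbhds E k T) (hUT : U ⊆ T) :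
    HasPrivateNbhds E k U := fun t ht =>
  (hT t (hUT ht)).trans <| card_le_card <|
    sdiff_subset_sdiff subset_rfl (setNbhd_mono (erase_subset_erase _ hUT))

lemma HasPrivateNbhds.hasStarForest_of_card_eq {n : ℕ} {T : Finset A}
    (hT : HasPrivateNbhds E k T) (hcard : #T = n) : HasStarForest E n k := by
  let e : Fin n ≃ T := (finCongr hcard.symm).trans T.equivFin.symm
  let a : Fin n → A := fun i => e i
  have ha_inj : Function.Injective a := fun i j h => e.injective (Subtype.ext h)
  have ha_mem_erase {i j : Fin n} (hij : i ≠ j) : a i ∈ T.erase (a j) :=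
    mem_erase.2 ⟨ha_inj.ne hij, (e i).2⟩
  choose L hL_sub hL_card using fun i => exists_subset_card_eq (hT (a i) (e i).2)
  have hL_private {i j : Fin n} (hij : i ≠ j) {b : B} (hb : b ∈ L j) (hE : E (a i) b) : False :=
    (mem_sdiff.1 (hL_sub j hb)).2 <|
      nbhd_subset_setNbhd (ha_mem_erase hij) (mem_filter.2 ⟨mem_univ b, hE⟩)
  refine ⟨a, L, ha_inj, fun i j hij => disjoint_left.2 fun b hbi hbj => ?_, hL_card,
    fun i b hb => (mem_filter.1 (mem_sdiff.1 (hL_sub i hb)).1).2,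
    fun i j hij b hb hE => hL_private hij hb hE⟩
  exact hL_private hij hbj (mem_filter.1 (mem_sdiff.1 (hL_sub i hbi)).1).2

lemma HasPrivateNbhds.hasStarForest {n : ℕ} {T : Finset A} (hT : HasPrivateNbhds E k T)
    (hn : n ≤ #T) : HasStarForest E n k := by
  obtain ⟨U, hUT, hU⟩ := exists_subset_card_eq hn
  exact (hT.mono hUT).hasStarForest_of_card_eq hU

lemma potential_le_potential_erase {t : A} {V : Finset A} (ht : t ∈ V)
    (hlt : #(nbhd E t \ setNbhd E (V.erase t)) < k) :
    potential E k V ≤ potential E k (V.erase t) := by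
  have h := potential_insert (E := E) (k := k) (notMem_erase t V)
  rw [insert_erase ht] at h
  omega

lemma exists_hasPrivateNbhds_potential_le (V : Finset A) :
    ∃ U, HasPrivateNbhds E k U ∧ potential E k V ≤ potential E k U := by
  induction V using strongInduction with
  | H V ih =>
    by_cases hV : HasPrivateNbhds E k V
    · exact ⟨V, hV, le_rfl⟩
    · obtain ⟨t, ht, hlt⟩ : ∃ t ∈ V, #(nbhd E t \ setNbhd E (V.erase t)) < k := by
        simpa [HasPrivateNbhds] using hV
      obtain ⟨U, hU, hle⟩ := ih _ (erase_ssubset ht)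
      exact ⟨U, hU, (potential_le_potential_erase ht hlt).trans hle⟩

end StarForest

open StarForest in
/-- In an `nΛ_k`-free bipartite graph there is a set `S ⊆ A` with `|S| ≤ n - 1` such that
every `a ∈ A` has fewer than `k` neighbours outside `N(S)`. -/
theorem starforest_free_cover {A B : Type*} [Fintype A] [Fintype B] [DecidableEq B]
    (E : A → B → Prop) [∀ a b, Decidable (E a b)] (n k : ℕ) (hk : 1 ≤ k)
    (hfree : ¬ HasStarForest E n k) :
    ∃ S : Finset A, S.card ≤ n - 1 ∧
      ∀ a : A, ((univ.filter (fun b => E a b)) \ (S.biUnion (fun s => univ.filter (fun b => E s b)))).card < k := by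
  classical
  obtain ⟨T, hT, hmax⟩ := exists_max_image (univ.filter (HasPrivateNbhds E k)) (potential E k)
    ⟨∅, mem_filter.2 ⟨mem_univ _, fun t ht => absurd ht (notMem_empty t)⟩⟩
  replace hT : HasPrivateNbhds E k T := (mem_filter.1 hT).2
  refine ⟨T, Nat.le_sub_one_of_lt (not_le.1 fun hn => hfree (hT.hasStarForest hn)), fun a => ?_⟩
  by_contra! ha
  change k ≤ #(nbhd E a \ setNbhd E T) at ha
  have haT : a ∉ T := fun haT => by
    rw [sdiff_eq_empty_iff_subset.2 (nbhd_subset_setNbhd haT), card_empty] at ha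
    omega
  obtain ⟨U, hU, hle⟩ := exists_hasPrivateNbhds_potential_le (E := E) (k := k) (insert a T)
  have := hmax U (mem_filter.2 ⟨mem_univ U, hU⟩)
  rw [potential_insert haT] at hle
  omega
end

section
/- Let G = (A, B, E) be a bipartite nΛ_k-free graph in which every vertex of B has degree at most d. Then at most nkd² vertices of A have degree at least k. -/
open Finset

/-! Let `S` be the set of top vertices of degree at least `k`, and fix `k` leaves `L a` among
the neighbours of each `a ∈ S`. Call `a, a' ∈ S` in conflict when one of them is adjacent to a
leaf of the other: the vertices of a conflict-free subset of `S`, with their leaves, form an induced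
star forest, so conflict-free subsets have fewer than `n` elements. Orient each conflict from `a`
to `a'` when `a'` meets a leaf of `a`; since a leaf has at most `d - 1` neighbours besides its
centre, out-degrees are at most `k (d - 1)`. Hence every set of vertices of the conflict graph
contains one with at most `2k (d - 1)` neighbours inside it, and the greedy algorithm finds a
conflict-free subset of size at least `|S| / (2k (d - 1) + 1) ≥ |S| / (k d²)`. -/

namespace SimpleGraph

variable {α : Type*} [DecidableEq α]

theorem exists_isIndepSet_card_le_mul (G : SimpleGraph α) [DecidableRel G.Adj] {D : ℕ}
    (P : Finset α) (hG : ∀ T ⊆ P, T.Nonempty → ∃ a ∈ T, #{b ∈ T | G.Adj a b} ≤ D) :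
    ∃ I ⊆ P, G.IsIndepSet I ∧ #P ≤ (D + 1) * #I := by
  induction P using Finset.strongInduction with
  | H P ih =>
  rcases P.eq_empty_or_nonempty with rfl | hP
  · exact ⟨∅, empty_subset _, by simp, by simp⟩
  obtain ⟨a, haP, ha⟩ := hG P subset_rfl hP
  set P' := P \ insert a {b ∈ P | G.Adj a b}
  have hP'P : P' ⊂ P :=
    sdiff_ssubset (insert_subset haP (filter_subset _ _)) (insert_nonempty _ _)
  obtain ⟨I, hIP', hI, hcard⟩ :=
    ih P' hP'P fun T hT => hG T (hT.trans hP'P.subset)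
  have haI : ∀ b ∈ I, b ≠ a ∧ ¬ G.Adj a b := fun b hb => by
    have := hIP' hb
    simp_all [P']
  refine ⟨insert a I, insert_subset haP (hIP'.trans hP'P.subset), ?_, ?_⟩
  · rw [coe_insert, IsIndepSet, Set.pairwise_insert]
    exact ⟨hI, fun b hb _ => ⟨(haI b hb).2, mt G.adj_symm (haI b hb).2⟩⟩
  · have hrem : #P ≤ #P' + (D + 1) := by
      calc #P ≤ #P' + #(insert a {b ∈ P | G.Adj a b}) := card_le_card_sdiff_add_card
        _ ≤ #P' + (D + 1) := by grw [card_insert_le, ha]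
    rw [card_insert_of_notMem fun h => (haI a h).1 rfl]
    linarith

theorem exists_card_filter_fromRel_adj_le {R : α → α → Prop} [DecidableRel R] {D : ℕ}
    {T : Finset α} (hT : T.Nonempty) (hR : ∀ a ∈ T, #{b ∈ T | a ≠ b ∧ R a b} ≤ D) :
    ∃ a ∈ T, #{b ∈ T | (fromRel R).Adj a b} ≤ 2 * D := by
  refine exists_le_of_sum_le hT ?_
  calc ∑ a ∈ T, #{b ∈ T | (fromRel R).Adj a b}
      ≤ ∑ a ∈ T, (#{b ∈ T | a ≠ b ∧ R a b} + #{b ∈ T | b ≠ a ∧ R b a}) := by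
        refine sum_le_sum fun a _ => (card_le_card ?_).trans (card_union_le _ _)
        intro b
        simp only [mem_filter, mem_union, fromRel_adj]
        tauto
    _ = 2 * ∑ a ∈ T, #{b ∈ T | a ≠ b ∧ R a b} := by
        rw [sum_add_distrib, two_mul]
        congr 1
        simp only [card_filter]
        exact sum_comm
    _ ≤ ∑ _a ∈ T, 2 * D := by
        rw [← mul_sum]
        gcongr with a ha
        exact hR a ha

end SimpleGraph

section
variable {A B : Type*} {E : A → B → Prop}

theorem hasStarForest_of_le_card {n k : ℕ} {s : Finset A} (hn : n ≤ #s) (L : A → Finset B)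
    (hcard : ∀ a ∈ s, #(L a) = k) (hleaf : ∀ a ∈ s, ∀ b ∈ L a, E a b)
    (hsep : ∀ a ∈ s, ∀ a' ∈ s, a ≠ a' → ∀ b ∈ L a, ¬ E a' b) : HasStarForest E n k := by
  let f : Fin n → A := fun i => s.equivFin.symm (Fin.castLE hn i)
  have hf : ∀ i, f i ∈ s := fun i => (s.equivFin.symm _).2
  have hfinj : f.Injective :=
    Subtype.val_injective.comp (s.equivFin.symm.injective.comp (Fin.castLE_injective hn))
  refine ⟨f, L ∘ f, hfinj, fun i j hij => disjoint_left.2 fun b hbi hbj => ?_,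
    fun i => hcard _ (hf i), fun i => hleaf _ (hf i), fun i j hij b hb => ?_⟩
  · exact hsep _ (hf j) _ (hf i) (hfinj.ne hij.symm) b hbj (hleaf _ (hf i) b hbi)
  · exact hsep _ (hf j) _ (hf i) (hfinj.ne hij.symm) b hb

theorem card_filter_exists_adj_le [Fintype A] [DecidableEq A] [∀ a b, Decidable (E a b)]
    {d : ℕ} (hdeg : ∀ b, #{a | E a b} ≤ d) {a : A} {L : Finset B} (hL : ∀ b ∈ L, E a b)
    (T : Finset A) : #{a' ∈ T | a ≠ a' ∧ ∃ b ∈ L, E a' b} ≤ #L * (d - 1) := by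
  calc #{a' ∈ T | a ≠ a' ∧ ∃ b ∈ L, E a' b}
      ≤ #(L.biUnion fun b => ({a' | E a' b} : Finset A).erase a) := by
        refine card_le_card fun a' => ?_
        simp only [mem_filter, mem_biUnion, mem_erase, mem_univ, true_and]
        rintro ⟨-, hne, b, hb, hE⟩
        exact ⟨b, hb, Ne.symm hne, hE⟩
    _ ≤ ∑ b ∈ L, #(({a' | E a' b} : Finset A).erase a) := card_biUnion_le
    _ ≤ ∑ _b ∈ L, (d - 1) := by
        refine sum_le_sum fun b hb => ?_
        rw [card_erase_of_mem (by simpa using hL b hb)]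
        exact Nat.sub_le_sub_right (hdeg b) 1
    _ = #L * (d - 1) := by rw [sum_const, smul_eq_mul]

end

/-- In an `nΛ_k`-free bipartite graph whose bottom vertices all have degree at most `d`,
at most `nkd²` top vertices have degree at least `k`. -/
theorem starforest_free_bounded_degree {A B : Type*} [Fintype A] [Fintype B]
    (E : A → B → Prop) [∀ a b, Decidable (E a b)] (n k d : ℕ) (hk : 1 ≤ k)
    (hfree : ¬ HasStarForest E n k)
    (hdeg : ∀ b : B, (univ.filter (fun a => E a b)).card ≤ d) :
    (univ.filter (fun a : A => k ≤ (univ.filter (fun b => E a b)).card)).card ≤ n * k * d ^ 2 := by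
  classical
  set S := univ.filter (fun a : A => k ≤ (univ.filter (fun b => E a b)).card)
  choose! L hLsub hLcard using
    fun a (ha : a ∈ S) => exists_subset_card_eq (mem_filter.1 ha).2
  have hleaf : ∀ a ∈ S, ∀ b ∈ L a, E a b := fun a ha b hb => (mem_filter.1 (hLsub a ha hb)).2
  obtain ⟨I, hIS, hI, hSI⟩ := (SimpleGraph.fromRel fun a a' => ∃ b ∈ L a, E a' b)
    |>.exists_isIndepSet_card_le_mul (D := 2 * (k * (d - 1))) S fun T hT hT₀ =>
      SimpleGraph.exists_card_filter_fromRel_adj_le hT₀ fun a ha =>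
        (card_filter_exists_adj_le hdeg (hleaf a (hT ha)) T).trans_eq
          (by rw [hLcard a (hT ha)])
  have hIn : #I < n := by
    by_contra! h
    exact hfree <| hasStarForest_of_le_card h L (fun a ha => hLcard a (hIS ha))
      (fun a ha => hleaf a (hIS ha))
      fun a ha a' ha' hne b hb hE => hI ha ha' hne ⟨hne, .inl ⟨b, hb, hE⟩⟩
  rcases S.eq_empty_or_nonempty with hS | ⟨a, ha⟩
  · simp [hS]
  obtain ⟨b, hb⟩ := card_pos.1 (hk.trans_eq (hLcard a ha).symm)
  have hd : 1 ≤ d :=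
    (card_pos.2 ⟨a, mem_filter.2 ⟨mem_univ a, hleaf a ha b hb⟩⟩).trans_le (hdeg b)
  -- `k * d ^ 2 - (2 * k * (d - 1) + 1) = k * (d - 1) ^ 2 + (k - 1)`
  have hD : 2 * (k * (d - 1)) + 1 ≤ k * d ^ 2 := by
    obtain ⟨e, rfl⟩ := Nat.exists_eq_add_of_le' hd
    simp only [Nat.add_sub_cancel]
    nlinarith [Nat.zero_le (k * e ^ 2)]
  calc #S ≤ (2 * (k * (d - 1)) + 1) * #I := hSI
    _ ≤ k * d ^ 2 * n := Nat.mul_le_mul hD hIn.le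
    _ = n * k * d ^ 2 := by ring
end

section
/- Let s ≥ 1 and let G = (A, B, E) be a bipartite graph not containing two induced disjoint stars 2Λ_s with centres in A. Order A = {a₁, …, a_q} so that |N(a₁)| ≤ |N(a₂)| ≤ … ≤ |N(a_q)|. Then for every i ≥ 2, |N(a_{i−1}) \ N(a_i)| < s. -/
open Finset

/-- A bipartite graph contains two induced disjoint stars `2Λ_s` with centres in the top
part `A`: distinct `a, a'` with disjoint leaf sets `B₁, B₂ ⊆ B` of size `s`, where `a` is
complete to `B₁` and anticomplete to `B₂`, and `a'` vice versa. -/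
def HasTwoStars {A B : Type*} (E : A → B → Prop) (s : ℕ) : Prop :=
  ∃ (a a' : A) (B₁ B₂ : Finset B), a ≠ a' ∧ Disjoint B₁ B₂ ∧ B₁.card = s ∧ B₂.card = s ∧
    (∀ b ∈ B₁, E a b) ∧ (∀ b ∈ B₂, ¬ E a b) ∧ (∀ b ∈ B₂, E a' b) ∧ (∀ b ∈ B₁, ¬ E a' b)

/-! If `|N(a)| ≤ |N(a')|` then `|N(a) \ N(a')| ≤ |N(a') \ N(a)|`, so `s` private neighbours of
`a` come with `s` private neighbours of `a'`, and these are the leaves of a `2Λ_s`. -/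

section TwoStars

variable {A B : Type*} [Fintype B] [DecidableEq B] (E : A → B → Prop) [∀ a b, Decidable (E a b)]

theorem hasTwoStars_of_le_card_sdiff {s : ℕ} {a a' : A} (hne : a ≠ a')
    (h : s ≤ ((univ.filter (E a ·)) \ univ.filter (E a' ·)).card)
    (h' : s ≤ ((univ.filter (E a' ·)) \ univ.filter (E a ·)).card) :
    HasTwoStars E s := by
  obtain ⟨B₁, hB₁, hB₁s⟩ := exists_subset_card_eq h
  obtain ⟨B₂, hB₂, hB₂s⟩ := exists_subset_card_eq h'
  have mem₁ : ∀ b ∈ B₁, E a b ∧ ¬ E a' b := fun b hb => by simpa using hB₁ hb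
  have mem₂ : ∀ b ∈ B₂, E a' b ∧ ¬ E a b := fun b hb => by simpa using hB₂ hb
  exact ⟨a, a', B₁, B₂, hne, disjoint_sdiff_sdiff.mono hB₁ hB₂, hB₁s, hB₂s,
    fun b hb => (mem₁ b hb).1, fun b hb => (mem₂ b hb).2,
    fun b hb => (mem₂ b hb).1, fun b hb => (mem₁ b hb).2⟩

theorem card_sdiff_lt_of_not_hasTwoStars {s : ℕ} (hfree : ¬ HasTwoStars E s) {a a' : A}
    (hne : a ≠ a') (hle : (univ.filter (E a ·)).card ≤ (univ.filter (E a' ·)).card) :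
    ((univ.filter (E a ·)) \ univ.filter (E a' ·)).card < s := by
  by_contra! h
  exact hfree <| hasTwoStars_of_le_card_sdiff E hne h
    (h.trans (card_sdiff_le_card_sdiff_iff.mpr hle))

end TwoStars

theorem twostars_free_consecutive_diff_general {A B : Type*} [Fintype B] [DecidableEq B]
    (E : A → B → Prop) [∀ a b, Decidable (E a b)] (s : ℕ)
    (hfree : ¬ HasTwoStars E s) (q : ℕ) (a : Fin q → A) (hbij : Function.Bijective a)
    (hmono : ∀ i j : Fin q, i ≤ j →
      (univ.filter (fun b => E (a i) b)).card ≤ (univ.filter (fun b => E (a j) b)).card) :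
    ∀ (i : ℕ) (h : i + 1 < q),
      ((univ.filter (fun b => E (a ⟨i, Nat.lt_of_succ_lt h⟩) b)) \
        (univ.filter (fun b => E (a ⟨i + 1, h⟩) b))).card < s := by
  intro i h
  exact card_sdiff_lt_of_not_hasTwoStars E hfree
    (hbij.injective.ne (by simp [Fin.ext_iff])) (hmono _ _ (by simp [Fin.le_def]))

/-- In a `2Λ_s`-free bipartite graph, if `A = {a₁, …, a_q}` is ordered by nondecreasing
degree, then consecutive vertices satisfy `|N(a_{i-1}) \ N(a_i)| < s`. -/
theorem twostars_free_consecutive_diff {A B : Type*} [Fintype B] [DecidableEq B]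
    (E : A → B → Prop) [∀ a b, Decidable (E a b)] (s : ℕ) (hs : 1 ≤ s)
    (hfree : ¬ HasTwoStars E s) (q : ℕ) (a : Fin q → A) (hbij : Function.Bijective a)
    (hmono : ∀ i j : Fin q, i ≤ j →
      (univ.filter (fun b => E (a i) b)).card ≤ (univ.filter (fun b => E (a j) b)).card) :
    ∀ (i : ℕ) (h : i + 1 < q),
      ((univ.filter (fun b => E (a ⟨i, Nat.lt_of_succ_lt h⟩) b)) \
        (univ.filter (fun b => E (a ⟨i + 1, h⟩) b))).card < s :=
  twostars_free_consecutive_diff_general E s hfree q a hbij hmono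
end

section
/- For any fixed s ≥ 1, the number of labelled bipartite graphs on vertex set {1,…,n} (with a given bipartition) that contain no induced 2Λ_s is at most (2n)^{2sn}. -/
/-!
If `a, a' ∈ A` and `deg a ≤ deg a'`, then `a` has fewer than `s` neighbours outside `N(a')`:
otherwise `a'` has at least as many outside `N(a)`, and `s` of each give an induced `2Λ_s`.
So, listing `A` by increasing degree, passing from one neighbourhood `N` to the next `N'` takes
`|N ∆ N'| = 2|N \ N'| + |N'| - |N| ≤ 2s - 2 + |N'| - |N|` toggles. With one more letter naming
the vertex, the sum telescopes: the graph is described by a word of length at most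
`(2s - 1)|A| + n ≤ 2sn` over the `2n` letters "toggle `b` in the current set" and
"the current set is the neighbourhood of `a`".
-/

open Finset
open scoped symmDiff

namespace TwoStarsFree

section Encoding

variable {α β : Type*}

/-- The state is a current set and a record of sets indexed by `α`; the letter `inl b` toggles
`b` in the current set and `inr a` records the current set at `a`. -/
def step [DecidableEq α] [DecidableEq β] (x : Finset β × (α → Finset β)) :
    β ⊕ α → Finset β × (α → Finset β)
  | .inl b => (x.1 ∆ {b}, x.2)
  | .inr a => (x.1, Function.update x.2 a x.1)

def decode [DecidableEq α] [DecidableEq β] (w : List (β ⊕ α)) : α → Finset β :=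
  (w.foldl step (∅, fun _ => ∅)).2

noncomputable def toggles [DecidableEq β] (S T : Finset β) : List (β ⊕ α) :=
  (S ∆ T).toList.map Sum.inl

noncomputable def encodeAlong [DecidableEq β] (N : α → Finset β) :
    Finset β → List α → List (β ⊕ α)
  | _, [] => []
  | S, a :: l => toggles S (N a) ++ Sum.inr a :: encodeAlong N (N a) l

/-- Trailing toggles are invisible to `decode`, so they can pad a word to any longer length. -/
def padTo (L : ℕ) (b₀ : β) (w : List (β ⊕ α)) : List (β ⊕ α) :=
  w ++ List.replicate (L - w.length) (Sum.inl b₀)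

lemma foldl_step_map_inl [DecidableEq α] [DecidableEq β] {l : List β} (hl : l.Nodup)
    (x : Finset β × (α → Finset β)) :
    (l.map Sum.inl).foldl step x = (x.1 ∆ l.toFinset, x.2) := by
  induction l generalizing x with
  | nil => simp [← bot_eq_empty]
  | cons b l ih =>
    rw [List.map_cons, List.foldl_cons, ih (List.nodup_cons.1 hl).2]
    have hb : Disjoint {b} l.toFinset := by simpa using (List.nodup_cons.1 hl).1
    simp only [step, symmDiff_assoc, hb.symmDiff_eq_sup, List.toFinset_cons, insert_eq,
      sup_eq_union]

lemma foldl_step_toggles [DecidableEq α] [DecidableEq β] (S T : Finset β) (g : α → Finset β) :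
    (toggles S T).foldl step (S, g) = (T, g) := by
  rw [toggles, foldl_step_map_inl (nodup_toList _), toList_toFinset, symmDiff_symmDiff_cancel_left]

lemma snd_foldl_step_replicate_inl [DecidableEq α] [DecidableEq β] (k : ℕ) (b : β)
    (x : Finset β × (α → Finset β)) :
    ((List.replicate k (Sum.inl b)).foldl step x).2 = x.2 := by
  induction k generalizing x with
  | zero => rfl
  | succ k ih => rw [List.replicate_succ, List.foldl_cons, ih]; rfl

lemma snd_foldl_step_encodeAlong [DecidableEq α] [DecidableEq β] (N : α → Finset β)
    (l : List α) (S : Finset β) (g : α → Finset β) :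
    ((encodeAlong N S l).foldl step (S, g)).2 = fun a => if a ∈ l then N a else g a := by
  induction l generalizing S g with
  | nil => simp [encodeAlong]
  | cons a l ih =>
    rw [encodeAlong, List.foldl_append, foldl_step_toggles, List.foldl_cons, step, ih]
    funext x
    by_cases hx : x = a <;> simp [hx]

lemma inr_mem_encodeAlong [DecidableEq β] {N : α → Finset β} {S : Finset β} {l : List α} {a : α} :
    Sum.inr a ∈ encodeAlong N S l ↔ a ∈ l := by
  induction l generalizing S with
  | nil => simp [encodeAlong]
  | cons b l ih => simp [encodeAlong, toggles, ih]

lemma card_symmDiff_add_card [DecidableEq β] (S T : Finset β) :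
    #(S ∆ T) + #S = 2 * #(S \ T) + #T := by
  have hST := card_sdiff_add_card S T
  have hTS := card_sdiff_add_card T S
  rw [union_comm] at hTS
  rw [Finset.symmDiff_def, card_union_of_disjoint disjoint_sdiff_sdiff]
  omega

lemma length_encodeAlong_add_le [DecidableEq β] [Fintype β] {N : α → Finset β} {s : ℕ} :
    ∀ {S : Finset β} {l : List α}, (S :: l.map N).IsChain (fun X Y => #(X \ Y) < s) →
      (encodeAlong N S l).length + #S + l.length ≤ 2 * s * l.length + Fintype.card β
  | S, [], _ => by simpa [encodeAlong] using card_le_univ S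
  | S, a :: l, h => by
    rw [List.map_cons, List.isChain_cons_cons] at h
    have ih := length_encodeAlong_add_le h.2
    have hS := card_symmDiff_add_card S (N a)
    simp only [encodeAlong, toggles, List.length_append, List.length_map, length_toList,
      List.length_cons] at ih ⊢
    nlinarith [h.1]

lemma length_padTo {L : ℕ} {b₀ : β} {w : List (β ⊕ α)} (h : w.length ≤ L) :
    (padTo L b₀ w).length = L := by
  simp only [padTo, List.length_append, List.length_replicate]
  omega

lemma decode_padTo [DecidableEq α] [DecidableEq β] (L : ℕ) (b₀ : β) (w : List (β ⊕ α)) :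
    decode (padTo L b₀ w) = decode w := by
  rw [decode, padTo, List.foldl_append, snd_foldl_step_replicate_inl, decode]

lemma inr_mem_padTo {L : ℕ} {b₀ : β} {w : List (β ⊕ α)} {a : α} :
    Sum.inr a ∈ padTo L b₀ w ↔ Sum.inr a ∈ w := by
  simp [padTo]

end Encoding

section Graph

variable {V : Type*} [Fintype V]

def nbhd (f : V → V → Bool) (a : V) : Finset V := {b | f a b}

lemma nbhd_injective : Function.Injective (nbhd : (V → V → Bool) → V → Finset V) := by
  intro f g h
  funext a b
  have hab := congrArg (b ∈ ·) (congrFun h a)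
  simpa [nbhd, Bool.coe_iff_coe] using hab

def IsBipartiteOn (A : Finset V) (f : V → V → Bool) : Prop :=
  ∀ i j, f i j = true → i ∈ A ∧ j ∉ A

def HasInducedTwoStars (s : ℕ) (A : Finset V) (f : V → V → Bool) : Prop :=
  ∃ (a a' : V) (B₁ B₂ : Finset V), a ∈ A ∧ a' ∈ A ∧ a ≠ a' ∧
    (∀ b ∈ B₁, b ∉ A) ∧ (∀ b ∈ B₂, b ∉ A) ∧ Disjoint B₁ B₂ ∧
    B₁.card = s ∧ B₂.card = s ∧
    (∀ b ∈ B₁, f a b = true) ∧ (∀ b ∈ B₂, f a b = false) ∧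
    (∀ b ∈ B₂, f a' b = true) ∧ (∀ b ∈ B₁, f a' b = false)

variable {s : ℕ} {A : Finset V} {f : V → V → Bool}

lemma nbhd_eq_empty (hf : IsBipartiteOn A f) {a : V} (ha : a ∉ A) : nbhd f a = ∅ := by
  ext b
  simpa [nbhd] using fun hab => ha (hf a b hab).1

lemma card_nbhd_sdiff_lt [DecidableEq V] (hf : IsBipartiteOn A f)
    (hfree : ¬ HasInducedTwoStars s A f)
    {a a' : V} (ha : a ∈ A) (ha' : a' ∈ A) (hne : a ≠ a')
    (hdeg : #(nbhd f a) ≤ #(nbhd f a')) : #(nbhd f a \ nbhd f a') < s := by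
  by_contra! hs
  have hs' : s ≤ #(nbhd f a' \ nbhd f a) := by
    have h₁ := card_sdiff_add_card_inter (nbhd f a) (nbhd f a')
    have h₂ := card_sdiff_add_card_inter (nbhd f a') (nbhd f a)
    rw [inter_comm] at h₂
    omega
  obtain ⟨B₁, hB₁, hcard₁⟩ := exists_subset_card_eq hs
  obtain ⟨B₂, hB₂, hcard₂⟩ := exists_subset_card_eq hs'
  have private₁ : ∀ b ∈ B₁, f a b = true ∧ f a' b = false := fun b hb => by
    simpa [nbhd] using hB₁ hb
  have private₂ : ∀ b ∈ B₂, f a' b = true ∧ f a b = false := fun b hb => by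
    simpa [nbhd] using hB₂ hb
  refine hfree ⟨a, a', B₁, B₂, ha, ha', hne, fun b hb => (hf a b (private₁ b hb).1).2,
    fun b hb => (hf a' b (private₂ b hb).1).2, ?_, hcard₁, hcard₂,
    fun b hb => (private₁ b hb).1, fun b hb => (private₂ b hb).2,
    fun b hb => (private₂ b hb).1, fun b hb => (private₁ b hb).2⟩
  exact disjoint_left.2 fun b hb₁ hb₂ =>
    absurd (private₁ b hb₁).1 (by simp [(private₂ b hb₂).2])

noncomputable def degreeOrder (f : V → V → Bool) (A : Finset V) : List V :=
  A.toList.mergeSort fun a b => #(nbhd f a) ≤ #(nbhd f b)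

lemma mem_degreeOrder {a : V} : a ∈ degreeOrder f A ↔ a ∈ A := by
  rw [degreeOrder, (List.mergeSort_perm _ _).mem_iff, mem_toList]

lemma length_degreeOrder : (degreeOrder f A).length = #A := by
  rw [degreeOrder, List.length_mergeSort, length_toList]

lemma isChain_degreeOrder [DecidableEq V] (hf : IsBipartiteOn A f)
    (hfree : ¬ HasInducedTwoStars s A f) :
    (degreeOrder f A).IsChain fun a b => #(nbhd f a \ nbhd f b) < s := by
  have hsorted := List.pairwise_mergeSort (le := fun a b => #(nbhd f a) ≤ #(nbhd f b))
    (fun _ _ _ h₁ h₂ => by simp only [decide_eq_true_eq] at *; omega)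
    (fun a b => by simpa using le_total _ _) A.toList
  have hnodup : (degreeOrder f A).Nodup := (List.mergeSort_perm _ _).nodup_iff.2 (nodup_toList A)
  refine ((hsorted.and hnodup).imp_of_mem fun ha hb h => ?_).isChain
  exact card_nbhd_sdiff_lt hf hfree (mem_degreeOrder.1 ha) (mem_degreeOrder.1 hb) h.2
    (by simpa using h.1)

noncomputable def encode [DecidableEq V] (f : V → V → Bool) (A : Finset V) : List (V ⊕ V) :=
  encodeAlong (nbhd f) ∅ (degreeOrder f A)

lemma decode_encode [DecidableEq V] (hf : IsBipartiteOn A f) :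
    decode (encode f A) = nbhd f := by
  rw [decode, encode, snd_foldl_step_encodeAlong]
  funext a
  by_cases ha : a ∈ A
  · simp [mem_degreeOrder, ha]
  · simp [mem_degreeOrder, ha, nbhd_eq_empty hf ha]

lemma inr_mem_encode [DecidableEq V] {a : V} : Sum.inr a ∈ encode f A ↔ a ∈ A := by
  rw [encode, inr_mem_encodeAlong, mem_degreeOrder]

lemma length_encode_le [DecidableEq V] (hs : 1 ≤ s) (hf : IsBipartiteOn A f)
    (hfree : ¬ HasInducedTwoStars s A f) : (encode f A).length ≤ 2 * s * Fintype.card V := by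
  have hchain : (∅ :: (degreeOrder f A).map (nbhd f)).IsChain fun X Y => #(X \ Y) < s := by
    refine List.isChain_cons.2 ⟨fun Y _ => by rw [empty_sdiff, card_empty]; exact hs, ?_⟩
    exact (List.isChain_map _).2 (isChain_degreeOrder hf hfree)
  have hlen := length_encodeAlong_add_le hchain
  rw [length_degreeOrder, card_empty, add_zero] at hlen
  have hA := card_le_univ A
  rw [encode]
  nlinarith

lemma eq_of_padTo_encode_eq [DecidableEq V] {L : ℕ} {b₀ : V} {B : Finset V} {g : V → V → Bool}
    (hf : IsBipartiteOn A f) (hg : IsBipartiteOn B g)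
    (h : padTo L b₀ (encode f A) = padTo L b₀ (encode g B)) : A = B ∧ f = g := by
  refine ⟨?_, nbhd_injective ?_⟩
  · ext a
    rw [← inr_mem_encode (f := f), ← inr_mem_encode (f := g),
      ← inr_mem_padTo (L := L) (b₀ := b₀), h, inr_mem_padTo]
  · rw [← decode_encode hf, ← decode_encode hg, ← decode_padTo L b₀, h, decode_padTo]

end Graph

end TwoStarsFree

open TwoStarsFree

/-- The number of labelled bipartite graphs on `{1,…,n}` (with a given bipartition
`A ∪ B`, edges only between `A` and its complement `B`) containing no induced `2Λ_s`
(two disjoint stars with centres in `A` and `s` leaves each in `B`) is at most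
`(2n)^(2sn)`. -/
theorem count_twostars_free_bipartite (s n : ℕ) (hs : 1 ≤ s) :
    Nat.card {p : Finset (Fin n) × (Fin n → Fin n → Bool) //
      (∀ i j, p.2 i j = true → i ∈ p.1 ∧ j ∉ p.1) ∧
      ¬ ∃ (a a' : Fin n) (B₁ B₂ : Finset (Fin n)), a ∈ p.1 ∧ a' ∈ p.1 ∧ a ≠ a' ∧
        (∀ b ∈ B₁, b ∉ p.1) ∧ (∀ b ∈ B₂, b ∉ p.1) ∧ Disjoint B₁ B₂ ∧
        B₁.card = s ∧ B₂.card = s ∧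
        (∀ b ∈ B₁, p.2 a b = true) ∧ (∀ b ∈ B₂, p.2 a b = false) ∧
        (∀ b ∈ B₂, p.2 a' b = true) ∧ (∀ b ∈ B₁, p.2 a' b = false)} ≤
    (2 * n) ^ (2 * s * n) := by
  change Nat.card {p : Finset (Fin n) × (Fin n → Fin n → Bool) //
    IsBipartiteOn p.1 p.2 ∧ ¬ HasInducedTwoStars s p.1 p.2} ≤ _
  rcases n with _ | n
  · simpa using Finite.card_le_one_iff_subsingleton.2 inferInstance
  let word (p : {p : Finset (Fin (n + 1)) × (Fin (n + 1) → Fin (n + 1) → Bool) //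
      IsBipartiteOn p.1 p.2 ∧ ¬ HasInducedTwoStars s p.1 p.2}) :
      List.Vector (Fin (n + 1) ⊕ Fin (n + 1)) (2 * s * (n + 1)) :=
    ⟨padTo _ 0 (encode p.1.2 p.1.1),
      length_padTo (by simpa using length_encode_le hs p.2.1 p.2.2)⟩
  have hword : Function.Injective word := fun p q hpq => by
    obtain ⟨hA, hf⟩ := eq_of_padTo_encode_eq p.2.1 q.2.1 (congrArg Subtype.val hpq)
    exact Subtype.ext (Prod.ext hA hf)
  calc _ ≤ Nat.card (List.Vector (Fin (n + 1) ⊕ Fin (n + 1)) (2 * s * (n + 1))) :=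
        Nat.card_le_card_of_injective word hword
    _ = _ := by simp [Nat.card_eq_fintype_card, two_mul]
end

section
/- Let G = (A, B, E) be a bipartite graph with a chain template A = A₁ ∪ … ∪ A_z, B = B₁ ∪ … ∪ B_z (Aᵢ complete to Bⱼ for j > i+1, Aᵢ anticomplete to Bⱼ for j < i), such that for all i the graph induced between Aᵢ and Bᵢ and the graph induced between Aᵢ and B_{i+1} are both 2K₂-free. Setting A' = ⋃_{i odd} Aᵢ, A'' = ⋃_{i even} Aᵢ, B' = ⋃_{i odd} Bᵢ, B'' = ⋃_{i even} Bᵢ, the induced bipartite graph between A' and B' is 2K₂-free. -/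
/-! Let `a₁ ∈ Aᵢ, a₂ ∈ Aⱼ, b₁ ∈ Bₖ, b₂ ∈ Bₗ` span an induced `2K₂` with edges `a₁b₁, a₂b₂`.
Since `Aᵢ` is anticomplete to earlier `B`-bags, the edges force `i ≤ k` and `j ≤ l`; since it is
complete to the bags beyond `B_{i+1}`, the non-edges force `l ≤ i + 1` and `k ≤ j + 1`. When all
four indices are odd this gives `i ≤ k ≤ j ≤ l ≤ i`, so the `2K₂` lies in a single pair
`(Aᵢ, Bᵢ)`. -/

/-- The bipartite graph induced between `SA ⊆ A` and `SB ⊆ B` contains an induced `2K₂`. -/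
def Has2K2Between {A B : Type*} (E : A → B → Prop) (SA : Set A) (SB : Set B) : Prop :=
  ∃ (a₁ a₂ : A) (b₁ b₂ : B), a₁ ∈ SA ∧ a₂ ∈ SA ∧ b₁ ∈ SB ∧ b₂ ∈ SB ∧ a₁ ≠ a₂ ∧ b₁ ≠ b₂ ∧
    E a₁ b₁ ∧ E a₂ b₂ ∧ ¬ E a₁ b₂ ∧ ¬ E a₂ b₁

section ChainTemplate

variable {A B : Type*} {E : A → B → Prop} {PA : ℕ → Set A} {PB : ℕ → Set B}
  {i k : ℕ} {a : A} {b : B}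

theorem le_of_adj_of_mem (hcojoin : ∀ i j, j < i → ∀ a ∈ PA i, ∀ b ∈ PB j, ¬ E a b)
    (ha : a ∈ PA i) (hb : b ∈ PB k) (hab : E a b) : i ≤ k :=
  not_lt.1 fun hki => hcojoin i k hki a ha b hb hab

theorem le_succ_of_not_adj_of_mem (hjoin : ∀ i j, i + 1 < j → ∀ a ∈ PA i, ∀ b ∈ PB j, E a b)
    (ha : a ∈ PA i) (hb : b ∈ PB k) (hab : ¬ E a b) : k ≤ i + 1 :=
  not_lt.1 fun hik => hab (hjoin i k hik a ha b hb)

end ChainTemplate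

theorem chain_template_odd_union_2K2_free_general {A B : Type*} (E : A → B → Prop)
    (PA : ℕ → Set A) (PB : ℕ → Set B)
    (hjoin : ∀ i j, i + 1 < j → ∀ a ∈ PA i, ∀ b ∈ PB j, E a b)
    (hcojoin : ∀ i j, j < i → ∀ a ∈ PA i, ∀ b ∈ PB j, ¬ E a b)
    (hsame : ∀ i, ¬ Has2K2Between E (PA i) (PB i)) :
    ¬ Has2K2Between E {a | ∃ m, a ∈ PA (2 * m + 1)} {b | ∃ m, b ∈ PB (2 * m + 1)} := by
  rintro ⟨a₁, a₂, b₁, b₂, ⟨i, ha₁⟩, ⟨j, ha₂⟩, ⟨k, hb₁⟩, ⟨l, hb₂⟩,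
    ha₁₂, hb₁₂, e₁₁, e₂₂, ne₁₂, ne₂₁⟩
  have hik := le_of_adj_of_mem hcojoin ha₁ hb₁ e₁₁
  have hjl := le_of_adj_of_mem hcojoin ha₂ hb₂ e₂₂
  have hli := le_succ_of_not_adj_of_mem hjoin ha₁ hb₂ ne₁₂
  have hkj := le_succ_of_not_adj_of_mem hjoin ha₂ hb₁ ne₂₁
  obtain ⟨rfl, rfl, rfl⟩ : j = i ∧ k = i ∧ l = i := by omega
  exact hsame _ ⟨a₁, a₂, b₁, b₂, ha₁, ha₂, hb₁, hb₂, ha₁₂, hb₁₂, e₁₁, e₂₂, ne₁₂, ne₂₁⟩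

/-- In a chain template of a bipartite graph whose graphs between consecutive bags
`(Aᵢ, Bᵢ)` and `(Aᵢ, B_{i+1})` are `2K₂`-free, the bipartite graph induced between the
union of the odd-indexed `A`-parts and the union of the odd-indexed `B`-parts is
`2K₂`-free. -/
theorem chain_template_odd_union_2K2_free {A B : Type*} (E : A → B → Prop) (z : ℕ)
    (PA : ℕ → Set A) (PB : ℕ → Set B)
    (hAcover : ∀ a : A, ∃ i, 1 ≤ i ∧ i ≤ z ∧ a ∈ PA i)
    (hBcover : ∀ b : B, ∃ i, 1 ≤ i ∧ i ≤ z ∧ b ∈ PB i)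
    (hAdisj : ∀ i j, i ≠ j → Disjoint (PA i) (PA j))
    (hBdisj : ∀ i j, i ≠ j → Disjoint (PB i) (PB j))
    (hjoin : ∀ i j, i + 1 < j → ∀ a ∈ PA i, ∀ b ∈ PB j, E a b)
    (hcojoin : ∀ i j, j < i → ∀ a ∈ PA i, ∀ b ∈ PB j, ¬ E a b)
    (hsame : ∀ i, ¬ Has2K2Between E (PA i) (PB i))
    (hnext : ∀ i, ¬ Has2K2Between E (PA i) (PB (i + 1))) :
    ¬ Has2K2Between E {a | ∃ m, a ∈ PA (2 * m + 1)} {b | ∃ m, b ∈ PB (2 * m + 1)} :=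
  chain_template_odd_union_2K2_free_general E PA PB hjoin hcojoin hsame
end

section
/- Let T ≥ 1 and let G be the perfect matching (T²+1)K₂ on 2(T²+1) vertices. Then G is not a (T,1)-graph: there is no partition of V(G) into at most T parts, each a clique or an independent set, with the bipartite graph induced between any two parts being 2K₂-free. -/
/-!
Colour each edge `{(i,0),(i,1)}` of the matching by the pair of parts containing its two ends.
There are at most `T²` such pairs but `T² + 1` edges, so two distinct edges `i ≠ j` get the same
pair `(c, d)`. If `c = d`, part `c` contains the edge `(i,0)(i,1)` and the non-edge `(i,0)(j,0)`,
so it is neither a clique nor independent; if `c ≠ d`, the two edges form an induced `2K₂`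
between parts `c` and `d`.
-/

/-- The perfect matching `N·K₂`: vertex set `Fin N × Fin 2`, with `(i,x)` adjacent to
`(j,y)` iff `i = j` and `x ≠ y`. -/
def matchingGraph (N : ℕ) : SimpleGraph (Fin N × Fin 2) :=
  SimpleGraph.fromRel (fun p q => p.1 = q.1)

lemma matchingGraph_adj_edge (N : ℕ) (i : Fin N) :
    (matchingGraph N).Adj (i, 0) (i, 1) := by
  simp [matchingGraph, SimpleGraph.fromRel_adj]

lemma matchingGraph_not_adj_of_ne (N : ℕ) {i j : Fin N} (h : i ≠ j) (x y : Fin 2) :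
    ¬ (matchingGraph N).Adj (i, x) (j, y) := by
  simp [matchingGraph, SimpleGraph.fromRel_adj, h, h.symm]

lemma exists_ne_edges_map_eq {N t : ℕ} (f : Fin N × Fin 2 → Fin t) (h : t ^ 2 < N) :
    ∃ i j : Fin N, i ≠ j ∧ f (i, 0) = f (j, 0) ∧ f (i, 1) = f (j, 1) := by
  have hcard : Fintype.card (Fin t × Fin t) < Fintype.card (Fin N) := by
    simpa [sq] using h
  obtain ⟨i, j, hij, heq⟩ :=
    Fintype.exists_ne_map_eq_of_card_lt (fun i : Fin N => (f (i, 0), f (i, 1))) hcard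
  exact ⟨i, j, hij, congrArg Prod.fst heq, congrArg Prod.snd heq⟩

theorem matching_not_T1_graph_general (T : ℕ) :
    ¬ ∃ (t : ℕ) (f : Fin (T ^ 2 + 1) × Fin 2 → Fin t), t ≤ T ∧
      (∀ i : Fin t,
        (∀ u v, f u = i → f v = i → u ≠ v → (matchingGraph (T ^ 2 + 1)).Adj u v) ∨
        (∀ u v, f u = i → f v = i → u ≠ v → ¬ (matchingGraph (T ^ 2 + 1)).Adj u v)) ∧
      (∀ i j : Fin t, i ≠ j →
        ¬ ∃ a₁ a₂ b₁ b₂, f a₁ = i ∧ f a₂ = i ∧ f b₁ = j ∧ f b₂ = j ∧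
          (matchingGraph (T ^ 2 + 1)).Adj a₁ b₁ ∧ (matchingGraph (T ^ 2 + 1)).Adj a₂ b₂ ∧
          ¬ (matchingGraph (T ^ 2 + 1)).Adj a₁ b₂ ∧
          ¬ (matchingGraph (T ^ 2 + 1)).Adj a₂ b₁ ∧ a₁ ≠ a₂ ∧ b₁ ≠ b₂) := by
  rintro ⟨t, f, ht, hparts, hbip⟩
  have ht_sq : t ^ 2 < T ^ 2 + 1 := Nat.lt_succ_of_le (Nat.pow_le_pow_left ht 2)
  obtain ⟨i, j, hij, h0, h1⟩ := exists_ne_edges_map_eq f ht_sq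
  by_cases hsame : f (i, 0) = f (i, 1)
  · rcases hparts (f (i, 0)) with hclique | hindep
    · exact matchingGraph_not_adj_of_ne _ hij 0 0
        (hclique (i, 0) (j, 0) rfl h0.symm (by simp [hij]))
    · exact hindep (i, 0) (i, 1) rfl hsame.symm (by simp) (matchingGraph_adj_edge _ i)
  · exact hbip _ _ hsame ⟨(i, 0), (j, 0), (i, 1), (j, 1), rfl, h0.symm, rfl, h1.symm,
      matchingGraph_adj_edge _ i, matchingGraph_adj_edge _ j,
      matchingGraph_not_adj_of_ne _ hij 0 1, matchingGraph_not_adj_of_ne _ hij.symm 0 1,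
      by simp [hij], by simp [hij]⟩

/-- For `T ≥ 1`, the matching `(T²+1)K₂` is not a `(T,1)`-graph: there is no partition of
its vertices into at most `T` parts, each a clique or an independent set, with the
bipartite graph between any two parts `2K₂`-free. -/
theorem matching_not_T1_graph (T : ℕ) (hT : 1 ≤ T) :
    ¬ ∃ (t : ℕ) (f : Fin (T ^ 2 + 1) × Fin 2 → Fin t), t ≤ T ∧
      (∀ i : Fin t,
        (∀ u v, f u = i → f v = i → u ≠ v → (matchingGraph (T ^ 2 + 1)).Adj u v) ∨
        (∀ u v, f u = i → f v = i → u ≠ v → ¬ (matchingGraph (T ^ 2 + 1)).Adj u v)) ∧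
      (∀ i j : Fin t, i ≠ j →
        ¬ ∃ a₁ a₂ b₁ b₂, f a₁ = i ∧ f a₂ = i ∧ f b₁ = j ∧ f b₂ = j ∧
          (matchingGraph (T ^ 2 + 1)).Adj a₁ b₁ ∧ (matchingGraph (T ^ 2 + 1)).Adj a₂ b₂ ∧
          ¬ (matchingGraph (T ^ 2 + 1)).Adj a₁ b₂ ∧
          ¬ (matchingGraph (T ^ 2 + 1)).Adj a₂ b₁ ∧ a₁ ≠ a₂ ∧ b₁ ≠ b₂) :=
  matching_not_T1_graph_general T
end

section
/- Let M be a finite set of vertices, each v ∈ M equipped with an integer interval trace tr(v) = {j(v), …, i(v)} ⊆ ℕ, and suppose that for every l ∈ ℕ the set {v ∈ M : l ∈ tr(v)} has at most c elements. Then M can be partitioned into at most c subsets M₁, …, M_c such that within each subset, the traces of any two distinct vertices are disjoint. -/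
/-!
Order the vertices by the left endpoints of their traces and colour them greedily, always
colouring next a vertex whose left endpoint is largest among those coloured so far. Every
already coloured trace that meets the new trace `[j, i]` starts at or before `j`, hence
contains `j`; together with the new vertex these are at most `c` vertices whose traces
contain `j`, so one of the `c` colours is still free.
-/

open Finset

section Coloring

variable {V κ : Type*} [DecidableEq V]

def IsProperColoringOn (r : V → V → Prop) (s : Finset V) (f : V → κ) : Prop :=
  ∀ v ∈ s, ∀ w ∈ s, v ≠ w → r v w → f v ≠ f w

lemma IsProperColoringOn.exists_update [DecidableEq κ] {r : V → V → Prop}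
    (hr : ∀ v w, r v w → r w v) {s : Finset V} {f : V → κ} (hf : IsProperColoringOn r s f) {C : Finset κ} (hfC : Set.MapsTo f s C)
    {a : V} (ha : a ∉ s) [DecidablePred (r a)] (hdeg : #(s.filter (r a)) < #C) :
    ∃ i ∈ C, IsProperColoringOn r (insert a s) (Function.update f a i) ∧
      Set.MapsTo (Function.update f a i) ((insert a s : Finset V) : Set V) C := by
  obtain ⟨i, hiC, hi⟩ : ∃ i ∈ C, i ∉ (s.filter (r a)).image f :=
    exists_mem_notMem_of_card_lt_card (card_image_le.trans_lt hdeg)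
  have hfree : ∀ w ∈ s, r a w → f w ≠ i := fun w hw hrw hwi =>
    hi (mem_image.2 ⟨w, mem_filter.2 ⟨hw, hrw⟩, hwi⟩)
  have hne : ∀ w ∈ s, w ≠ a := fun w hw hwa => ha (hwa ▸ hw)
  refine ⟨i, hiC, ?_, ?_⟩
  · intro v hv w hw hvw hrvw
    rcases mem_insert.1 hv with rfl | hvs <;> rcases mem_insert.1 hw with rfl | hws
    · exact absurd rfl hvw
    · simpa [hne w hws] using (hfree w hws hrvw).symm
    · simpa [hne v hvs] using hfree v hvs (hr v w hrvw)
    · simpa [hne v hvs, hne w hws] using hf v hvs w hws hvw hrvw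
  · intro v hv
    rcases mem_insert.1 (mem_coe.1 hv) with rfl | hvs
    · simpa using hiC
    · simpa [hne v hvs] using hfC hvs

end Coloring

lemma mem_Icc_of_le_of_not_disjoint_Icc {α : Type*} [LinearOrder α] [LocallyFiniteOrder α]
    {a b a' b' : α} (h : a ≤ a') (hd : ¬Disjoint (Icc a b) (Icc a' b')) : a' ∈ Icc a b := by
  obtain ⟨x, hx, hx'⟩ := not_disjoint_iff.1 hd
  rw [mem_Icc] at hx hx' ⊢
  exact ⟨h, hx'.1.trans hx.2⟩

-- Colours are natural numbers below `c` rather than elements of `Fin c`: for `c = 0` and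
-- nonempty `V` there is no map `V → Fin 0`, even when `M` is empty.
theorem exists_coloring_of_intervals {V α : Type*} [DecidableEq V] [LinearOrder α]
    [LocallyFiniteOrder α] {M : Finset V} {tr : V → Finset α} {lo hi : V → α}
    (hle : ∀ v ∈ M, lo v ≤ hi v) (htr : ∀ v ∈ M, tr v = Icc (lo v) (hi v)) {c : ℕ}
    (hcap : ∀ l, #(M.filter (l ∈ tr ·)) ≤ c) :
    ∃ f : V → ℕ, Set.MapsTo f M (range c) ∧
      IsProperColoringOn (fun v w => ¬Disjoint (tr v) (tr w)) M f := by
  suffices ∀ s ⊆ M, ∃ f : V → ℕ, Set.MapsTo f s (range c) ∧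
      IsProperColoringOn (fun v w => ¬Disjoint (tr v) (tr w)) s f from this M subset_rfl
  intro s
  induction s using induction_on_max_value lo with
  | empty => exact fun _ => ⟨fun _ => 0, fun v hv => absurd hv (notMem_empty v), by simp [IsProperColoringOn]⟩
  | insert a s ha hmax ih =>
    intro hsM
    have haM : a ∈ M := hsM (mem_insert_self a s)
    obtain ⟨f, hfC, hf⟩ := ih ((subset_insert a s).trans hsM)
    have hlo_mem : ∀ v ∈ M, lo v ∈ tr v := fun v hv => htr v hv ▸ left_mem_Icc.2 (hle v hv)
    have hnbr : insert a (s.filter fun w => ¬Disjoint (tr a) (tr w)) ⊆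
        M.filter (lo a ∈ tr ·) := by
      refine insert_subset (mem_filter.2 ⟨haM, hlo_mem a haM⟩) fun w hw => ?_
      obtain ⟨hws, hd⟩ := mem_filter.1 hw
      have hwM := hsM (mem_insert_of_mem hws)
      rw [htr a haM, htr w hwM, disjoint_comm] at hd
      exact mem_filter.2 ⟨hwM, htr w hwM ▸ mem_Icc_of_le_of_not_disjoint_Icc (hmax w hws) hd⟩
    have hdeg : #(s.filter fun w => ¬Disjoint (tr a) (tr w)) < #(range c) := by
      have := (card_le_card hnbr).trans (hcap (lo a))
      rw [card_insert_of_notMem fun h => ha (mem_filter.1 h).1] at this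
      simpa using this
    obtain ⟨i, -, hf', hfC'⟩ :=
      hf.exists_update (fun _ _ h h' => h h'.symm) hfC ha hdeg
    exact ⟨_, hfC', hf'⟩

/-- If each vertex of a finite set `M` carries a nonempty interval trace `tr v ⊆ ℕ` and
every natural number lies in the traces of at most `c` vertices, then `M` can be
partitioned into at most `c` parts within which all traces are pairwise disjoint. -/
theorem trace_partition {V : Type*} [DecidableEq V] (M : Finset V) (tr : V → Finset ℕ)
    (c : ℕ)
    (hinterval : ∀ v ∈ M, ∃ j i : ℕ, j ≤ i ∧ tr v = Finset.Icc j i)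
    (hcap : ∀ l : ℕ, (M.filter (fun v => l ∈ tr v)).card ≤ c) :
    ∃ P : Fin c → Finset V,
      (∀ i, P i ⊆ M) ∧
      (∀ v ∈ M, ∃ i, v ∈ P i) ∧
      (∀ i j, i ≠ j → Disjoint (P i) (P j)) ∧
      (∀ i, ∀ v ∈ P i, ∀ w ∈ P i, v ≠ w → Disjoint (tr v) (tr w)) := by
  choose! lo hi hle htr using hinterval
  obtain ⟨f, hfC, hf⟩ := exists_coloring_of_intervals hle htr hcap
  refine ⟨fun i => M.filter (f · = i), fun i => filter_subset _ _,
    fun v hv => ⟨⟨f v, mem_range.1 (hfC hv)⟩, mem_filter.2 ⟨hv, rfl⟩⟩, ?_, ?_⟩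
  · intro i j hij
    refine disjoint_filter.2 fun v _ hvi hvj => hij (Fin.ext (hvi.symm.trans hvj))
  · intro i v hv w hw hvw
    obtain ⟨hvM, hvi⟩ := mem_filter.1 hv
    obtain ⟨hwM, hwi⟩ := mem_filter.1 hw
    by_contra hd
    exact hf v hvM w hwM hvw hd (hvi.trans hwi.symm)
end

section
/- Suppose X and Y are hereditary graph classes such that every graph G ∈ X has a vertex partition into at most T parts with each part inducing a graph in Y and each induced bipartite graph between two parts belonging to Y, and suppose the number of labelled n-vertex graphs in Y is at most (2n)^{cn} for some constant c. Then the number of labelled n-vertex graphs in X is at most n^{C·n} for some constant C depending only on T and c (in particular X has at most factorial speed of growth). -/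
/-!
Fix for every graph `G ∈ X` a partition `f : V(G) → Fin T` as in the hypothesis and write
`V_i = f⁻¹ i`. For every ordered pair `(i, j)`, including `i = j`, the graph `G[V_i, V_j]`
restricted to `V_i ∪ V_j` lies in `Y` (for `i = j` it is `G[V_i]`), and these `T²` graphs
together with `f` determine `G`. Hence `|X_n| ≤ T ^ n · ((2n) ^ (cn)) ^ (T²)`, which is at most
`n ^ ((T + 2cT²) n)` as soon as `2n ≤ n²` and `T ≤ n ^ T`, i.e. for `n ≥ 2`; for `n ≤ 1` there
is only one graph.
-/

open Finset Function

namespace SimpleGraph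

variable {V W ι : Type*}

/-- `G[V_i, V_j]`, where `V_i = f⁻¹ i`. -/
def crossGraph (G : SimpleGraph V) (f : V → ι) (i j : ι) : SimpleGraph V :=
  fromRel fun u v => G.Adj u v ∧ f u = i ∧ f v = j

theorem crossGraph_adj_iff {G : SimpleGraph V} {f : V → ι} {u v : V} :
    (G.crossGraph f (f u) (f v)).Adj u v ↔ G.Adj u v := by
  rw [crossGraph, fromRel_adj]
  exact ⟨fun ⟨_, h⟩ => h.elim (·.1) (·.1.symm),
    fun huv => ⟨huv.ne, Or.inl ⟨huv, rfl, rfl⟩⟩⟩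

theorem comap_crossGraph_self {G : SimpleGraph V} {f : V → ι} {i : ι} (φ : W → V)
    (hφ : ∀ w, f (φ w) = i) : (G.crossGraph f i i).comap φ = G.comap φ := by
  ext a b
  simp only [comap_adj, crossGraph, fromRel_adj, hφ, and_true]
  exact ⟨fun ⟨_, hab⟩ => hab.elim id (·.symm), fun hab => ⟨hab.ne, Or.inl hab⟩⟩

end SimpleGraph

open SimpleGraph

def IsHereditary (P : ∀ n : ℕ, SimpleGraph (Fin n) → Prop) : Prop :=
  ∀ (m n : ℕ) (φ : Fin m ↪ Fin n) (G : SimpleGraph (Fin n)), P n G → P m (G.comap φ)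

theorem IsHereditary.comap_of_range_subset {P : ∀ n : ℕ, SimpleGraph (Fin n) → Prop}
    (hP : IsHereditary P) {k m n : ℕ} {G : SimpleGraph (Fin n)} {φ : Fin m ↪ Fin n}
    (ψ : Fin k ↪ Fin n) (hψφ : Set.range ψ ⊆ Set.range φ) (hG : P m (G.comap φ)) :
    P k (G.comap ψ) := by
  choose g hg using fun a => hψφ (Set.mem_range_self a)
  have hg_inj : Injective g := fun a b hab => ψ.injective <| by rw [← hg a, ← hg b, hab]
  have hcomp : (G.comap φ).comap g = G.comap ψ := by
    ext a b
    simp only [comap_adj, hg]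
  exact hcomp ▸ hP k m ⟨g, hg_inj⟩ _ hG

section Covering

variable {n : ℕ} {ι : Type*} [DecidableEq ι]

def partsSet (f : Fin n → ι) (i j : ι) : Finset (Fin n) :=
  {v | f v = i ∨ f v = j}

/-- Canonical, so that the codes of `G` below depend on `G` and `f` only. -/
def partsEmb (f : Fin n → ι) (i j : ι) : Fin #(partsSet f i j) ↪ Fin n :=
  ((partsSet f i j).orderEmbOfFin rfl).toEmbedding

theorem range_partsEmb (f : Fin n → ι) (i j : ι) :
    Set.range (partsEmb f i j) = {v | f v = i ∨ f v = j} :=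
  (range_orderEmbOfFin _ _).trans (by ext; simp [partsSet])

def crossCode (G : SimpleGraph (Fin n)) (f : Fin n → ι) (i j : ι) :
    SimpleGraph (Fin #(partsSet f i j)) :=
  (G.crossGraph f i j).comap (partsEmb f i j)

theorem crossCode_injective (f : Fin n → ι) :
    Injective fun (G : SimpleGraph (Fin n)) (i j : ι) => crossCode G f i j := by
  intro G G' h
  ext u v
  obtain ⟨a, ha⟩ : u ∈ Set.range (partsEmb f (f u) (f v)) := by
    rw [range_partsEmb]; exact Or.inl rfl
  obtain ⟨b, hb⟩ : v ∈ Set.range (partsEmb f (f u) (f v)) := by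
    rw [range_partsEmb]; exact Or.inr rfl
  have hab := congrArg (fun H => H.Adj a b) (congrFun (congrFun h (f u)) (f v))
  simp only [crossCode, comap_adj, ha, hb] at hab
  rwa [crossGraph_adj_iff, crossGraph_adj_iff, eq_iff_iff] at hab

def IsCoveringPartition (Y : ∀ n : ℕ, SimpleGraph (Fin n) → Prop) (G : SimpleGraph (Fin n))
    (f : Fin n → ι) : Prop :=
  (∀ i : ι, ∃ (m : ℕ) (φ : Fin m ↪ Fin n),
    Set.range φ = {v | f v = i} ∧ Y m (G.comap φ)) ∧
  (∀ i j : ι, i ≠ j → ∃ (m : ℕ) (φ : Fin m ↪ Fin n),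
    Set.range φ = {v | f v = i ∨ f v = j} ∧
    Y m ((SimpleGraph.fromRel (fun u v => G.Adj u v ∧ f u = i ∧ f v = j)).comap φ))

theorem IsCoveringPartition.crossCode_mem {Y : ∀ n : ℕ, SimpleGraph (Fin n) → Prop}
    (hY : IsHereditary Y) {G : SimpleGraph (Fin n)} {f : Fin n → ι}
    (hf : IsCoveringPartition Y G f) (i j : ι) : Y _ (crossCode G f i j) := by
  by_cases hij : i = j
  · subst hij
    obtain ⟨m, φ, hφ, hYφ⟩ := hf.1 i
    have hrange : Set.range (partsEmb f i i) = Set.range φ := by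
      simp only [range_partsEmb, hφ, or_self]
    have hpart a : f (partsEmb f i i a) = i := by
      simpa using (range_partsEmb f i i).subset (Set.mem_range_self a)
    rw [crossCode, comap_crossGraph_self _ hpart]
    exact hY.comap_of_range_subset _ hrange.subset hYφ
  · obtain ⟨m, φ, hφ, hYφ⟩ := hf.2 i j hij
    exact hY.comap_of_range_subset _ (by rw [hφ, range_partsEmb]) hYφ

theorem crossCode_sigma_injective :
    Injective fun p : (Fin n → ι) × SimpleGraph (Fin n) =>
      (⟨p.1, fun i j => crossCode p.2 p.1 i j⟩ :
        Σ f : Fin n → ι, ∀ i j : ι, SimpleGraph (Fin #(partsSet f i j))) := by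
  rintro ⟨f, G⟩ ⟨f', G'⟩ h
  obtain ⟨rfl, h⟩ := Sigma.mk.inj_iff.1 h
  rw [show G = G' from crossCode_injective f (eq_of_heq h)]

abbrev CrossCodes (Y : ∀ n : ℕ, SimpleGraph (Fin n) → Prop) (n : ℕ) (ι : Type*)
    [DecidableEq ι] : Type _ :=
  Σ f : Fin n → ι, ∀ i j : ι, {H : SimpleGraph (Fin #(partsSet f i j)) // Y _ H}

theorem card_le_card_crossCodes {X Y : ∀ n : ℕ, SimpleGraph (Fin n) → Prop} [Fintype ι]
    (hY : IsHereditary Y) (hX : ∀ G, X n G → ∃ f : Fin n → ι, IsCoveringPartition Y G f) :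
    Nat.card {G // X n G} ≤ Nat.card (CrossCodes Y n ι) := by
  choose f hf using hX
  refine Nat.card_le_card_of_injective (fun G => ⟨f G.1 G.2,
      fun i j => ⟨crossCode G.1 (f G.1 G.2) i j, (hf _ _).crossCode_mem hY i j⟩⟩)
    fun G G' h => Subtype.ext ?_
  have hcodes := congrArg (Sigma.map (fun f => f) fun _ c i j => (c i j).1) h
  exact congrArg Prod.snd
    (@crossCode_sigma_injective _ _ _ (f _ G.2, G.1) (f _ G'.2, G'.1) hcodes)

theorem card_crossCodes_le {Y : ∀ n : ℕ, SimpleGraph (Fin n) → Prop} [Fintype ι] {B : ℕ}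
    (hB : ∀ m ≤ n, Nat.card {H : SimpleGraph (Fin m) // Y m H} ≤ B) :
    Nat.card (CrossCodes Y n ι) ≤
      Fintype.card ι ^ n * B ^ (Fintype.card ι * Fintype.card ι) := by
  calc Nat.card (CrossCodes Y n ι)
      ≤ ∑ _f : Fin n → ι, ∏ _i : ι, ∏ _j : ι, B := by
        rw [Nat.card_sigma]
        gcongr with f _
        simp only [Nat.card_pi]
        gcongr with i _ j _
        exact hB _ ((card_le_univ _).trans_eq (Fintype.card_fin n))
    _ = Fintype.card ι ^ n * B ^ (Fintype.card ι * Fintype.card ι) := by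
        simp [pow_mul]

end Covering

theorem two_mul_pow_le_two_mul_pow {c m n : ℕ} (h : m ≤ n) :
    (2 * m) ^ (c * m) ≤ (2 * n) ^ (c * n) := by
  rcases Nat.eq_zero_or_pos m with rfl | hm
  · rcases Nat.eq_zero_or_pos n with rfl | hn
    · rfl
    · simpa using Nat.one_le_pow _ _ (by omega)
  · calc (2 * m) ^ (c * m) ≤ (2 * n) ^ (c * m) := Nat.pow_le_pow_left (by omega) _
      _ ≤ (2 * n) ^ (c * n) := Nat.pow_le_pow_right (by omega) (Nat.mul_le_mul_left c h)

theorem pow_mul_two_mul_pow_le {T c n : ℕ} (hn : 2 ≤ n) :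
    T ^ n * ((2 * n) ^ (c * n)) ^ (T * T) ≤ n ^ ((T + 2 * c * T * T) * n) := by
  have hT : T ≤ n ^ T := Nat.lt_two_pow_self.le.trans (Nat.pow_le_pow_left hn T)
  have h2n : 2 * n ≤ n ^ 2 := by nlinarith
  calc T ^ n * ((2 * n) ^ (c * n)) ^ (T * T)
      ≤ (n ^ T) ^ n * ((n ^ 2) ^ (c * n)) ^ (T * T) := by gcongr
    _ = n ^ ((T + 2 * c * T * T) * n) := by ring

/-- Factorial speed via locally bounded coverings: if every graph in a hereditary class
`X` admits a vertex partition into at most `T` parts with each part inducing a graph of a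
hereditary class `Y` and each bipartite graph between two parts belonging to `Y`, and `Y`
contains at most `(2n)^(cn)` labelled graphs on `n` vertices, then `X` contains at most
`n^(Cn)` labelled graphs on `n` vertices for some constant `C = C(T, c)`. -/
theorem factorial_speed_of_covering (T c : ℕ) : ∃ C : ℕ,
    ∀ (X Y : ∀ n : ℕ, SimpleGraph (Fin n) → Prop),
      (∀ (m n : ℕ) (φ : Fin m ↪ Fin n) (G : SimpleGraph (Fin n)),
        X n G → X m (G.comap φ)) →
      (∀ (m n : ℕ) (φ : Fin m ↪ Fin n) (G : SimpleGraph (Fin n)),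
        Y n G → Y m (G.comap φ)) →
      (∀ (n : ℕ) (G : SimpleGraph (Fin n)), X n G →
        ∃ f : Fin n → Fin T,
          (∀ i : Fin T, ∃ (m : ℕ) (φ : Fin m ↪ Fin n),
            Set.range φ = {v | f v = i} ∧ Y m (G.comap φ)) ∧
          (∀ i j : Fin T, i ≠ j → ∃ (m : ℕ) (φ : Fin m ↪ Fin n),
            Set.range φ = {v | f v = i ∨ f v = j} ∧
            Y m ((SimpleGraph.fromRel (fun u v => G.Adj u v ∧ f u = i ∧ f v = j)).comap φ))) →
      (∀ n : ℕ, Nat.card {G : SimpleGraph (Fin n) // Y n G} ≤ (2 * n) ^ (c * n)) →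
      ∀ n : ℕ, Nat.card {G : SimpleGraph (Fin n) // X n G} ≤ n ^ (C * n) := by
  refine ⟨T + 2 * c * T * T, fun X Y _ hY hcov hcount n => ?_⟩
  rcases le_or_gt n 1 with hn | hn
  · have : Subsingleton (Fin n) := Fin.subsingleton_iff_le_one.2 hn
    calc Nat.card {G : SimpleGraph (Fin n) // X n G} ≤ 1 :=
          Finite.card_le_one_iff_subsingleton.2 inferInstance
      _ ≤ n ^ ((T + 2 * c * T * T) * n) := by interval_cases n <;> simp
  · calc Nat.card {G : SimpleGraph (Fin n) // X n G}
        ≤ Nat.card (CrossCodes Y n (Fin T)) := card_le_card_crossCodes hY (hcov n)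
      _ ≤ T ^ n * ((2 * n) ^ (c * n)) ^ (T * T) := by
          simpa using card_crossCodes_le (ι := Fin T) fun m hm =>
            (hcount m).trans (two_mul_pow_le_two_mul_pow hm)
      _ ≤ n ^ ((T + 2 * c * T * T) * n) := pow_mul_two_mul_pow_le hn
end
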